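/- arXiv:1710.11237 — 3 statements merged into one kernel-verified Lean document; each statement's English description precedes it below -/
import Mathlib

section
/- Let φ be a nonnegative measurable function on the Lorentz cone Λ₃ and let Δ(y) = y₁²−y₂²−y₃². The following are equivalent: (i) ∫_{Λ₃} φ(y) dy < ∞; (ii) there exist α > 1 and a constant C > 0 such that ∫_{Λ₃} Δ(y+t)^{3/2−2α} φ(y) dy ≤ C Δ(t)^{3/2−2α} for every t ∈ Λ₃; (iii) for every α > 1 there exists a constant C > 0 such that ∫_{Λ₃} Δ(y+t)^{3/2−2α} φ(y) dy ≤ C Δ(t)^{3/2−2α} for every t ∈ Λ₃. -/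
/-!
On the cone, `Δ` is monotone: `Δ(t) ≤ Δ(y + t)`. Since the exponent `s = 3/2 − 2α` is negative,
this bounds the weighted integral by `Δ(t)^s ∫ φ`, which gives (i) ⇒ (iii). Conversely, testing (ii)
at `t = (R, 0, 0)` and using `Δ(y + t) ≤ 4 Δ(t)` for `y₁ ≤ R` bounds `∫ φ` over `Λ₃ ∩ {y₁ ≤ R}` by
`4^{-s} C`, uniformly in `R`; monotone convergence gives (i).
-/

open MeasureTheory Set
open scoped ENNReal NNReal

noncomputable section

/-- The Lorentz cone `Λ₃ = {y ∈ ℝ³ : y₁ + y₂ > 0, y₁² − y₂² − y₃² > 0}`. -/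
def Lambda3 : Set (Fin 3 → ℝ) :=
  {y | 0 < y 0 + y 1 ∧ 0 < (y 0) ^ 2 - (y 1) ^ 2 - (y 2) ^ 2}

/-- The determinant function of the Lorentz cone: `Δ(y) = y₁² − y₂² − y₃²`. -/
def DeltaL (y : Fin 3 → ℝ) : ℝ := (y 0) ^ 2 - (y 1) ^ 2 - (y 2) ^ 2

lemma ENNReal.ofReal_mul_le_ofReal_mul {a b : ℝ} (x : ℝ) (ha : 0 ≤ a) (hab : a ≤ b) :
    ENNReal.ofReal (a * x) ≤ ENNReal.ofReal (b * x) := by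
  rw [ENNReal.ofReal_mul ha, ENNReal.ofReal_mul (ha.trans hab)]
  gcongr

namespace Lambda3

lemma measurableSet : MeasurableSet Lambda3 := by
  rw [Lambda3, ofPred_and]
  exact (measurableSet_lt measurable_const (by fun_prop)).inter
    (measurableSet_lt measurable_const (by fun_prop))

lemma pos_apply_zero {y : Fin 3 → ℝ} (hy : y ∈ Lambda3) : 0 < y 0 := by
  obtain ⟨h1, h2⟩ := hy
  nlinarith [sq_nonneg (y 2)]

lemma deltaL_pos {y : Fin 3 → ℝ} (hy : y ∈ Lambda3) : 0 < DeltaL y := hy.2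

/-- Reverse Cauchy–Schwarz for the Lorentz form `B(y, t) = y₁t₁ − y₂t₂ − y₃t₃`. -/
lemma lorentz_form_pos {y t : Fin 3 → ℝ} (hy : y ∈ Lambda3) (ht : t ∈ Lambda3) :
    0 < y 0 * t 0 - y 1 * t 1 - y 2 * t 2 := by
  have hyt := mul_pos (pos_apply_zero hy) (pos_apply_zero ht)
  have hy' : y 1 ^ 2 + y 2 ^ 2 < y 0 ^ 2 := by linarith [hy.2]
  have ht' : t 1 ^ 2 + t 2 ^ 2 < t 0 ^ 2 := by linarith [ht.2]
  have hcs : (y 1 * t 1 + y 2 * t 2) ^ 2 < (y 0 * t 0) ^ 2 := by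
    nlinarith [sq_nonneg (y 1 * t 2 - y 2 * t 1),
      mul_lt_mul'' hy' ht' (by positivity) (by positivity)]
  linarith [(abs_lt_of_sq_lt_sq' hcs hyt.le).2]

lemma deltaL_le_deltaL_add {y t : Fin 3 → ℝ} (hy : y ∈ Lambda3) (ht : t ∈ Lambda3) :
    DeltaL t ≤ DeltaL (y + t) := by
  have hexpand :
      DeltaL (y + t) = DeltaL y + DeltaL t + 2 * (y 0 * t 0 - y 1 * t 1 - y 2 * t 2) := by
    simp only [DeltaL, Pi.add_apply]
    ring
  linarith [deltaL_pos hy, lorentz_form_pos hy ht]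

lemma deltaL_add_pos {y t : Fin 3 → ℝ} (hy : y ∈ Lambda3) (ht : t ∈ Lambda3) :
    0 < DeltaL (y + t) :=
  (deltaL_pos ht).trans_le (deltaL_le_deltaL_add hy ht)

lemma deltaL_axis (R : ℝ) : DeltaL ![R, 0, 0] = R ^ 2 := by
  simp [DeltaL]

lemma axis_mem {R : ℝ} (hR : 0 < R) : ![R, 0, 0] ∈ Lambda3 :=
  ⟨by simpa using hR, show 0 < DeltaL _ by rw [deltaL_axis]; positivity⟩

lemma deltaL_add_axis_le {y : Fin 3 → ℝ} {R : ℝ} (hy : y ∈ Lambda3) (hyR : y 0 ≤ R) :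
    DeltaL (y + ![R, 0, 0]) ≤ 4 * DeltaL ![R, 0, 0] := by
  have hy0 := pos_apply_zero hy
  rw [deltaL_axis]
  simp only [DeltaL, Pi.add_apply, Matrix.cons_val_zero, Matrix.cons_val_one, Matrix.cons_val,
    add_zero]
  nlinarith [sq_nonneg (y 1), sq_nonneg (y 2)]

end Lambda3

/-- Condition (ii)/(iii) of the theorem, for the exponent `s = 3/2 − 2α`. -/
def HasBerezinBound (φ : (Fin 3 → ℝ) → ℝ) (s : ℝ) : Prop :=
  ∃ C : ℝ, 0 < C ∧ ∀ t ∈ Lambda3,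
    (∫⁻ y in Lambda3, ENNReal.ofReal (DeltaL (y + t) ^ s * φ y)) ≤ ENNReal.ofReal (C * DeltaL t ^ s)

section BerezinBound

variable {φ : (Fin 3 → ℝ) → ℝ} {s : ℝ}

lemma setLIntegral_deltaL_add_rpow_mul_le (hs : s ≤ 0) {t : Fin 3 → ℝ} (ht : t ∈ Lambda3) :
    ∫⁻ y in Lambda3, ENNReal.ofReal (DeltaL (y + t) ^ s * φ y)
      ≤ ENNReal.ofReal (DeltaL t ^ s) * ∫⁻ y in Lambda3, ENNReal.ofReal (φ y) := by
  have hΔt := Lambda3.deltaL_pos ht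
  calc ∫⁻ y in Lambda3, ENNReal.ofReal (DeltaL (y + t) ^ s * φ y)
      ≤ ∫⁻ y in Lambda3, ENNReal.ofReal (DeltaL t ^ s * φ y) := by
        refine setLIntegral_mono' Lambda3.measurableSet fun y hy => ?_
        exact ENNReal.ofReal_mul_le_ofReal_mul _
          (Real.rpow_nonneg (Lambda3.deltaL_add_pos hy ht).le _)
          (Real.rpow_le_rpow_of_nonpos hΔt (Lambda3.deltaL_le_deltaL_add hy ht) hs)
    _ = ENNReal.ofReal (DeltaL t ^ s) * ∫⁻ y in Lambda3, ENNReal.ofReal (φ y) := by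
        simp_rw [ENNReal.ofReal_mul (Real.rpow_nonneg hΔt.le s)]
        exact lintegral_const_mul' _ _ ENNReal.ofReal_ne_top

lemma hasBerezinBound_of_lintegral_lt_top (hs : s ≤ 0)
    (h : ∫⁻ y in Lambda3, ENNReal.ofReal (φ y) < ⊤) : HasBerezinBound φ s := by
  set I := ∫⁻ y in Lambda3, ENNReal.ofReal (φ y)
  have hI : I ≤ ENNReal.ofReal (I.toReal + 1) := by
    rw [← ENNReal.ofReal_toReal h.ne]
    exact ENNReal.ofReal_le_ofReal (by simp)
  refine ⟨I.toReal + 1, by positivity, fun t ht => ?_⟩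
  calc _ ≤ ENNReal.ofReal (DeltaL t ^ s) * I := setLIntegral_deltaL_add_rpow_mul_le hs ht
    _ ≤ ENNReal.ofReal (DeltaL t ^ s) * ENNReal.ofReal (I.toReal + 1) := by gcongr
    _ = ENNReal.ofReal ((I.toReal + 1) * DeltaL t ^ s) := by
        rw [mul_comm, ENNReal.ofReal_mul (by positivity)]

lemma ofReal_four_rpow_mul_setLIntegral_le {C : ℝ} (hs : s ≤ 0)
    (hbound : ∀ t ∈ Lambda3, (∫⁻ y in Lambda3, ENNReal.ofReal (DeltaL (y + t) ^ s * φ y))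
      ≤ ENNReal.ofReal (C * DeltaL t ^ s))
    {R : ℝ} (hR : 0 < R) :
    ENNReal.ofReal (4 ^ s) * ∫⁻ y in Lambda3 ∩ {y | y 0 ≤ R}, ENNReal.ofReal (φ y)
      ≤ ENNReal.ofReal C := by
  set t : Fin 3 → ℝ := ![R, 0, 0]
  have ht : t ∈ Lambda3 := Lambda3.axis_mem hR
  have hΔ : 0 < DeltaL t := Lambda3.deltaL_pos ht
  have hΔt : 0 < DeltaL t ^ s := Real.rpow_pos_of_pos hΔ s
  have hS : MeasurableSet (Lambda3 ∩ {y | y 0 ≤ R}) :=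
    Lambda3.measurableSet.inter (measurableSet_le (by fun_prop) measurable_const)
  rw [← ENNReal.mul_le_mul_iff_left (ENNReal.ofReal_pos.2 hΔt).ne' ENNReal.ofReal_ne_top]
  calc ENNReal.ofReal (4 ^ s) * (∫⁻ y in Lambda3 ∩ {y | y 0 ≤ R}, ENNReal.ofReal (φ y))
        * ENNReal.ofReal (DeltaL t ^ s)
      = ∫⁻ y in Lambda3 ∩ {y | y 0 ≤ R}, ENNReal.ofReal ((4 * DeltaL t) ^ s * φ y) := by
        rw [Real.mul_rpow (by norm_num) hΔ.le, mul_right_comm,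
          ← ENNReal.ofReal_mul (by positivity), ← lintegral_const_mul' _ _ ENNReal.ofReal_ne_top]
        simp_rw [ENNReal.ofReal_mul (by positivity : (0 : ℝ) ≤ 4 ^ s * DeltaL t ^ s)]
    _ ≤ ∫⁻ y in Lambda3 ∩ {y | y 0 ≤ R}, ENNReal.ofReal (DeltaL (y + t) ^ s * φ y) := by
        refine setLIntegral_mono' hS fun y ⟨hy, hyR⟩ => ?_
        exact ENNReal.ofReal_mul_le_ofReal_mul _ (Real.rpow_nonneg (by positivity) s)
          (Real.rpow_le_rpow_of_nonpos (Lambda3.deltaL_add_pos hy ht)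
            (Lambda3.deltaL_add_axis_le hy hyR) hs)
    _ ≤ ∫⁻ y in Lambda3, ENNReal.ofReal (DeltaL (y + t) ^ s * φ y) :=
        lintegral_mono_set inter_subset_left
    _ ≤ ENNReal.ofReal C * ENNReal.ofReal (DeltaL t ^ s) := by
        rw [← ENNReal.ofReal_mul' hΔt.le]
        exact hbound t ht

lemma lintegral_lt_top_of_hasBerezinBound (hs : s ≤ 0) (h : HasBerezinBound φ s) :
    ∫⁻ y in Lambda3, ENNReal.ofReal (φ y) < ⊤ := by
  obtain ⟨C, -, hbound⟩ := h
  have hcover : Lambda3 = ⋃ n : ℕ, Lambda3 ∩ {y | y 0 ≤ n + 1} := by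
    rw [← inter_iUnion, eq_comm, inter_eq_left]
    intro y _
    obtain ⟨n, hn⟩ := exists_nat_ge (y 0)
    exact mem_iUnion.2 ⟨n, show y 0 ≤ n + 1 by linarith⟩
  have hmono : Monotone fun n : ℕ => Lambda3 ∩ {y | y 0 ≤ n + 1} := fun m n hmn =>
    inter_subset_inter_right _ fun y (hy : y 0 ≤ m + 1) =>
      show y 0 ≤ n + 1 by linarith [(Nat.cast_le (α := ℝ)).2 hmn]
  have hle : ENNReal.ofReal (4 ^ s) * ∫⁻ y in Lambda3, ENNReal.ofReal (φ y) ≤ ENNReal.ofReal C := by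
    rw [hcover, setLIntegral_iUnion_of_directed _ hmono.directed_le, ENNReal.mul_iSup]
    exact iSup_le fun n => ofReal_four_rpow_mul_setLIntegral_le hs hbound n.cast_add_one_pos
  exact ENNReal.lt_top_of_mul_ne_top_right (hle.trans_lt ENNReal.ofReal_lt_top).ne
    (ENNReal.ofReal_pos.2 (by positivity)).ne'

lemma lintegral_lt_top_iff_hasBerezinBound (hs : s ≤ 0) :
    ∫⁻ y in Lambda3, ENNReal.ofReal (φ y) < ⊤ ↔ HasBerezinBound φ s :=
  ⟨hasBerezinBound_of_lintegral_lt_top hs, lintegral_lt_top_of_hasBerezinBound hs⟩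

end BerezinBound

theorem integrable_iff_berezin_bound_general
    (φ : (Fin 3 → ℝ) → ℝ) :
    ((∫⁻ y in Lambda3, ENNReal.ofReal (φ y)) < ⊤ ↔
      (∃ α : ℝ, 1 < α ∧ ∃ C : ℝ, 0 < C ∧ ∀ t ∈ Lambda3,
        (∫⁻ y in Lambda3, ENNReal.ofReal (DeltaL (y + t) ^ (3 / 2 - 2 * α) * φ y))
          ≤ ENNReal.ofReal (C * DeltaL t ^ (3 / 2 - 2 * α)))) ∧
    ((∫⁻ y in Lambda3, ENNReal.ofReal (φ y)) < ⊤ ↔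
      (∀ α : ℝ, 1 < α → ∃ C : ℝ, 0 < C ∧ ∀ t ∈ Lambda3,
        (∫⁻ y in Lambda3, ENNReal.ofReal (DeltaL (y + t) ^ (3 / 2 - 2 * α) * φ y))
          ≤ ENNReal.ofReal (C * DeltaL t ^ (3 / 2 - 2 * α)))) := by
  have hs : ∀ α : ℝ, 1 < α → 3 / 2 - 2 * α ≤ 0 := fun α hα => by linarith
  have key := fun α hα => lintegral_lt_top_iff_hasBerezinBound (φ := φ) (hs α hα)
  exact ⟨⟨fun h => ⟨2, one_lt_two, (key 2 one_lt_two).1 h⟩,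
      fun ⟨α, hα, hB⟩ => (key α hα).2 hB⟩,
    ⟨fun h α hα => (key α hα).1 h, fun h => (key 2 one_lt_two).2 (h 2 one_lt_two)⟩⟩

/-- for a nonnegative measurable `φ` on `Λ₃`, the following are equivalent:
(i) `∫_{Λ₃} φ < ∞`;
(ii) for some `α > 1` there is `C > 0` with
  `∫_{Λ₃} Δ(y+t)^{3/2−2α} φ(y) dy ≤ C Δ(t)^{3/2−2α}` for all `t ∈ Λ₃`;
(iii) the same holds for every `α > 1`. -/
theorem integrable_iff_berezin_bound
    (φ : (Fin 3 → ℝ) → ℝ) (hφm : Measurable φ) (hφ : ∀ y, 0 ≤ φ y) :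
    ((∫⁻ y in Lambda3, ENNReal.ofReal (φ y)) < ⊤ ↔
      (∃ α : ℝ, 1 < α ∧ ∃ C : ℝ, 0 < C ∧ ∀ t ∈ Lambda3,
        (∫⁻ y in Lambda3, ENNReal.ofReal (DeltaL (y + t) ^ (3 / 2 - 2 * α) * φ y))
          ≤ ENNReal.ofReal (C * DeltaL t ^ (3 / 2 - 2 * α)))) ∧
    ((∫⁻ y in Lambda3, ENNReal.ofReal (φ y)) < ⊤ ↔
      (∀ α : ℝ, 1 < α → ∃ C : ℝ, 0 < C ∧ ∀ t ∈ Lambda3,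
        (∫⁻ y in Lambda3, ENNReal.ofReal (DeltaL (y + t) ^ (3 / 2 - 2 * α) * φ y))
          ≤ ENNReal.ofReal (C * DeltaL t ^ (3 / 2 - 2 * α)))) :=
  integrable_iff_berezin_bound_general φ
end
end

section
/- Let φ be a nonnegative measurable function on the Lorentz cone Λ₃ and let μ be the measure on T_{Λ₃} given by dμ(x+iy) = φ(y) dx dy. Then there exists a constant C > 0 such that ∫_{T_{Λ₃}} |F(z)|² dμ(z) ≤ C ‖F‖²_{H²(T_{Λ₃})} for every F ∈ H²(T_{Λ₃}) if and only if sup_{t∈Λ₃} ∫_{Λ₃} φ(y) e^{−2⟨t,y⟩} dy < ∞, where ⟨t,y⟩ = t₁y₁+t₂y₂+t₃y₃. -/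
open MeasureTheory Set
open scoped ENNReal NNReal BigOperators

set_option maxHeartbeats 1000000

noncomputable section

/-- The tube domain `T_{Λ₃} = ℝ³ + iΛ₃ ⊂ ℂ³`. -/
def TLambda3 : Set (Fin 3 → ℂ) :=
  {z | (fun i => (z i).im) ∈ Lambda3}

/-- Square of the Hardy space `H²(T_{Λ₃})` norm:
`‖F‖² = sup_{y ∈ Λ₃} ∫_{ℝ³} |F(x+iy)|² dx`. -/
def hardyNormSq (F : (Fin 3 → ℂ) → ℂ) : ℝ≥0∞ :=
  ⨆ y ∈ Lambda3,
    ∫⁻ x : Fin 3 → ℝ, (‖F (fun i => (x i : ℂ) + (y i : ℂ) * Complex.I)‖₊ : ℝ≥0∞) ^ 2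

namespace RadialCarlesonAux

open Real Filter

lemma Lambda3_m1 {y : Fin 3 → ℝ} (hy : y ∈ Lambda3) : 0 < y 0 := by
  obtain ⟨h1, h2⟩ := hy; nlinarith [sq_nonneg (y 2), sq_nonneg (y 0 - y 1)]

lemma Lambda3_m2 {y : Fin 3 → ℝ} (hy : y ∈ Lambda3) : 0 < y 0 - y 1 := by
  obtain ⟨h1, h2⟩ := hy; nlinarith [sq_nonneg (y 2)]

lemma Lambda3_m3 {y : Fin 3 → ℝ} (hy : y ∈ Lambda3) : 0 < y 0 + y 2 := by
  have h0 := Lambda3_m1 hy; obtain ⟨h1, h2⟩ := hy; nlinarith [sq_nonneg (y 1)]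

lemma Lambda3_inner_nonneg {t y : Fin 3 → ℝ} (ht : t ∈ Lambda3) (hy : y ∈ Lambda3) :
    0 ≤ t 0 * y 0 + t 1 * y 1 + t 2 * y 2 := by
  have ht0 := Lambda3_m1 ht; have hy0 := Lambda3_m1 hy
  obtain ⟨ht1, ht2⟩ := ht; obtain ⟨hy1, hy2⟩ := hy
  nlinarith [sq_nonneg (t 1 * y 2 - t 2 * y 1), mul_pos ht0 hy0,
    mul_pos ht2 hy2, sq_nonneg (t 1 * y 1 + t 2 * y 2)]

lemma measurableSet_Lambda3 : MeasurableSet Lambda3 := by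
  have : Lambda3 = {y : Fin 3 → ℝ | 0 < y 0 + y 1} ∩
      {y : Fin 3 → ℝ | 0 < (y 0)^2 - (y 1)^2 - (y 2)^2} := rfl
  rw [this]
  exact (measurableSet_lt measurable_const
      ((measurable_pi_apply 0).add (measurable_pi_apply 1))).inter
    (measurableSet_lt measurable_const
      ((((measurable_pi_apply 0).pow_const 2).sub ((measurable_pi_apply 1).pow_const 2)).sub
        ((measurable_pi_apply 2).pow_const 2)))

/-! ### The one-dimensional Lorentzian integral -/

lemma integrable_lorentzian (ε b c : ℝ) (hε : 0 < ε) (hb : 0 < b) :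
    Integrable (fun u : ℝ => ((ε*(u+c))^2 + b^2)⁻¹) := by
  have h2 : Integrable (fun u : ℝ => (1 + ((ε/b)*u)^2)⁻¹) :=
    integrable_inv_one_add_sq.comp_mul_left' (div_ne_zero hε.ne' hb.ne')
  have h3 : Integrable (fun u : ℝ => (1 + ((ε/b)*(u+c))^2)⁻¹) := h2.comp_add_right c
  have h4 := h3.const_mul ((b^2)⁻¹)
  apply h4.congr
  filter_upwards with u
  rw [eq_comm]
  rw [show (ε*(u+c))^2 + b^2 = b^2 * (1 + ((ε/b)*(u+c))^2) by field_simp; ring]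
  rw [mul_inv]

lemma integral_lorentzian (ε b c : ℝ) (hε : 0 < ε) (hb : 0 < b) :
    ∫ u : ℝ, ((ε*(u+c))^2 + b^2)⁻¹ = π/(ε*b) := by
  have h0 : ∫ u : ℝ, ((ε*(u+c))^2 + b^2)⁻¹
      = ∫ u : ℝ, ((ε*u)^2 + b^2)⁻¹ :=
    integral_add_right_eq_self (fun u : ℝ => ((ε*u)^2 + b^2)⁻¹) c
  rw [h0]
  have h1 : ∀ u : ℝ, ((ε*u)^2 + b^2)⁻¹ = (b^2)⁻¹ * (1 + ((ε/b)*u)^2)⁻¹ := by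
    intro u
    rw [← mul_inv, show b^2 * (1 + ((ε/b)*u)^2) = (ε*u)^2 + b^2 by field_simp; ring]
  simp_rw [h1]
  rw [MeasureTheory.integral_const_mul]
  rw [MeasureTheory.Measure.integral_comp_mul_left (fun v : ℝ => (1 + v^2)⁻¹) (ε/b),
    integral_univ_inv_one_add_sq]
  rw [abs_of_pos (by positivity), smul_eq_mul]
  field_simp

lemma lintegral_lorentzian (ε b c : ℝ) (hε : 0 < ε) (hb : 0 < b) :
    ∫⁻ u : ℝ, ENNReal.ofReal (((ε*(u+c))^2 + b^2)⁻¹) = ENNReal.ofReal (π/(ε*b)) := by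
  rw [← ofReal_integral_eq_lintegral_ofReal (integrable_lorentzian ε b c hε hb)
    (Filter.Eventually.of_forall fun u => by positivity), integral_lorentzian ε b c hε hb]

lemma meas_lor (ε b : ℝ) : Measurable (fun u : ℝ => ENNReal.ofReal (((ε*u)^2 + b^2)⁻¹)) :=
  ((((measurable_const.mul measurable_id).pow_const 2).add_const _).inv).ennreal_ofReal

/-! ### The three-dimensional Tonelli computation -/

lemma lintegral_three (ε b1 b2 b3 : ℝ) (hε : 0 < ε) (hb1 : 0 < b1) (hb2 : 0 < b2) (hb3 : 0 < b3) :
    ∫⁻ x : Fin 3 → ℝ,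
      (ENNReal.ofReal (((ε*(x 0))^2 + b1^2)⁻¹) * ENNReal.ofReal (((ε*(x 0 - x 1))^2 + b2^2)⁻¹)
        * ENNReal.ofReal (((ε*(x 0 + x 2))^2 + b3^2)⁻¹))
    = ENNReal.ofReal (π/(ε*b1)) * ENNReal.ofReal (π/(ε*b2)) * ENNReal.ofReal (π/(ε*b3)) := by
  set A : ℝ → ℝ≥0∞ := fun u => ENNReal.ofReal (((ε*u)^2 + b1^2)⁻¹) with hA
  set B : ℝ → ℝ≥0∞ := fun u => ENNReal.ofReal (((ε*u)^2 + b2^2)⁻¹) with hB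
  set C : ℝ → ℝ≥0∞ := fun u => ENNReal.ofReal (((ε*u)^2 + b3^2)⁻¹) with hC
  have mA : Measurable A := meas_lor ε b1
  have mB : Measurable B := meas_lor ε b2
  have mC : Measurable C := meas_lor ε b3
  have hAnt : ∀ u, A u ≠ ⊤ := fun u => ENNReal.ofReal_ne_top
  set H : (Fin 3 → ℝ) → ℝ≥0∞ := fun x => A (x 0) * B (x 0 - x 1) * C (x 0 + x 2) with hH
  have mH : Measurable H :=
    ((mA.comp (measurable_pi_apply 0)).mul
      (mB.comp ((measurable_pi_apply 0).sub (measurable_pi_apply 1)))).mul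
      (mC.comp ((measurable_pi_apply 0).add (measurable_pi_apply 2)))
  have huniv : (Finset.univ : Finset (Fin 3)) = insert 2 (insert 1 {0}) := by decide
  have step1 : ∫⁻ x : Fin 3 → ℝ, H x = (∫⋯∫⁻_Finset.univ, H) (fun _ => (0:ℝ)) := by
    rw [volume_pi]; exact lintegral_eq_lmarginal_univ _
  rw [step1, huniv, lmarginal_insert' _ mH (by decide)]
  set G : (Fin 3 → ℝ) → ℝ≥0∞ := fun x => A (x 0) * B (x 0 - x 1) * ENNReal.ofReal (π/(ε*b3))
    with hG
  have e2 : (fun x : Fin 3 → ℝ => ∫⁻ u : ℝ, H (Function.update x 2 u)) = G := by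
    funext x
    have hupd : ∀ u : ℝ, H (Function.update x 2 u)
        = (A (x 0) * B (x 0 - x 1)) * C (x 0 + u) := by
      intro u
      simp [hH, Function.update_of_ne, Function.update_self]
    simp_rw [hupd]
    rw [lintegral_const_mul' _ _ (ENNReal.mul_ne_top ENNReal.ofReal_ne_top ENNReal.ofReal_ne_top)]
    have : ∫⁻ u : ℝ, C (x 0 + u) = ENNReal.ofReal (π/(ε*b3)) := by
      rw [← lintegral_lorentzian ε b3 (x 0) hε hb3]
      refine lintegral_congr fun u => ?_
      simp only [hC]; congr 2; ring
    rw [this, hG]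
  rw [e2]
  have mG : Measurable G :=
    ((mA.comp (measurable_pi_apply 0)).mul
      (mB.comp ((measurable_pi_apply 0).sub (measurable_pi_apply 1)))).mul measurable_const
  rw [lmarginal_insert' _ mG (by decide)]
  set G2 : (Fin 3 → ℝ) → ℝ≥0∞ :=
    fun x => A (x 0) * (ENNReal.ofReal (π/(ε*b2)) * ENNReal.ofReal (π/(ε*b3))) with hG2
  have e3 : (fun x : Fin 3 → ℝ => ∫⁻ u : ℝ, G (Function.update x 1 u)) = G2 := by
    funext x
    have hupd : ∀ u : ℝ, G (Function.update x 1 u)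
        = (A (x 0) * ENNReal.ofReal (π/(ε*b3))) * B (x 0 - u) := by
      intro u
      simp only [hG, Function.update_of_ne (show (0:Fin 3) ≠ 1 by decide), Function.update_self]
      ring
    simp_rw [hupd]
    rw [lintegral_const_mul' _ _ (ENNReal.mul_ne_top (hAnt _) ENNReal.ofReal_ne_top)]
    have hneg : ∫⁻ u : ℝ, B (x 0 - u) = ∫⁻ u : ℝ, B (x 0 + u) := by
      have h := (MeasureTheory.Measure.measurePreserving_neg (volume : Measure ℝ)).lintegral_comp
        (f := fun v => B (x 0 + v)) (mB.comp (measurable_const.add measurable_id))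
      simpa [sub_eq_add_neg] using h
    have : ∫⁻ u : ℝ, B (x 0 + u) = ENNReal.ofReal (π/(ε*b2)) := by
      rw [← lintegral_lorentzian ε b2 (x 0) hε hb2]
      refine lintegral_congr fun u => ?_
      simp only [hB]; congr 2; ring
    rw [hneg, this, hG2]; ring
  rw [e3]
  rw [lmarginal_singleton]
  have e4 : ∫⁻ u : ℝ, G2 (Function.update (fun _ => (0:ℝ)) 0 u)
      = ENNReal.ofReal (π/(ε*b1)) * (ENNReal.ofReal (π/(ε*b2)) * ENNReal.ofReal (π/(ε*b3))) := by
    have hupd : ∀ u : ℝ, G2 (Function.update (fun _ => (0:ℝ)) 0 u)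
        = A u * (ENNReal.ofReal (π/(ε*b2)) * ENNReal.ofReal (π/(ε*b3))) := by
      intro u; simp only [hG2, Function.update_self]
    simp_rw [hupd]
    rw [lintegral_mul_const' _ _ (ENNReal.mul_ne_top ENNReal.ofReal_ne_top ENNReal.ofReal_ne_top)]
    congr 1
    rw [← lintegral_lorentzian ε b1 0 hε hb1]
    refine lintegral_congr fun u => ?_
    simp only [hA]; congr 2; ring
  exact e4.trans (by ring)

/-! ### The test functions -/

def Feps (ε : ℝ) : (Fin 3 → ℂ) → ℂ := fun z =>
  (((ε:ℂ) * z 0 + Complex.I) * ((ε:ℂ) * (z 0 - z 1) + Complex.I)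
    * ((ε:ℂ) * (z 0 + z 2) + Complex.I))⁻¹

lemma norm_ofReal_sq (z : ℂ) : ((‖z‖₊ : ℝ≥0∞))^2 = ENNReal.ofReal (‖z‖^2) := by
  rw [ENNReal.ofReal_pow (norm_nonneg _), ← coe_nnnorm, ENNReal.ofReal_coe_nnreal]

lemma norm_sq_add_mul_I (p q : ℝ) : ‖(p:ℂ) + (q:ℂ)*Complex.I‖^2 = p^2 + q^2 := by
  rw [Complex.sq_norm, Complex.normSq_add_mul_I]

lemma normFeps (ε : ℝ) (x y : Fin 3 → ℝ) :
    ((‖Feps ε (fun i => (x i : ℂ) + (y i : ℂ) * Complex.I)‖₊ : ℝ≥0∞))^2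
    = ENNReal.ofReal (((ε*(x 0))^2 + (ε*(y 0)+1)^2)⁻¹)
      * ENNReal.ofReal (((ε*(x 0 - x 1))^2 + (ε*(y 0 - y 1)+1)^2)⁻¹)
      * ENNReal.ofReal (((ε*(x 0 + x 2))^2 + (ε*(y 0 + y 2)+1)^2)⁻¹) := by
  set z : Fin 3 → ℂ := fun i => (x i : ℂ) + (y i : ℂ) * Complex.I with hz
  have h1 : (ε:ℂ) * z 0 + Complex.I
      = ((ε*(x 0) : ℝ):ℂ) + ((ε*(y 0)+1 : ℝ):ℂ)*Complex.I := by
    simp only [hz]; push_cast; ring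
  have h2 : (ε:ℂ) * (z 0 - z 1) + Complex.I
      = ((ε*(x 0 - x 1) : ℝ):ℂ) + ((ε*(y 0 - y 1)+1 : ℝ):ℂ)*Complex.I := by
    simp only [hz]; push_cast; ring
  have h3 : (ε:ℂ) * (z 0 + z 2) + Complex.I
      = ((ε*(x 0 + x 2) : ℝ):ℂ) + ((ε*(y 0 + y 2)+1 : ℝ):ℂ)*Complex.I := by
    simp only [hz]; push_cast; ring
  rw [norm_ofReal_sq, Feps, h1, h2, h3]
  rw [norm_inv, norm_mul, norm_mul, inv_pow, mul_pow, mul_pow]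
  rw [norm_sq_add_mul_I, norm_sq_add_mul_I, norm_sq_add_mul_I]
  rw [mul_inv, mul_inv]
  rw [ENNReal.ofReal_mul (by positivity), ENNReal.ofReal_mul (by positivity)]

lemma diffFeps (ε : ℝ) (hε : 0 ≤ ε) : DifferentiableOn ℂ (Feps ε) TLambda3 := by
  have hcoord : ∀ i : Fin 3, Differentiable ℂ (fun z : Fin 3 → ℂ => z i) := fun i =>
    (ContinuousLinearMap.proj (R := ℂ) (φ := fun _ : Fin 3 => ℂ) i).differentiable
  have hg : Differentiable ℂ (fun z : Fin 3 → ℂ =>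
      ((ε:ℂ) * z 0 + Complex.I) * ((ε:ℂ) * (z 0 - z 1) + Complex.I)
        * ((ε:ℂ) * (z 0 + z 2) + Complex.I)) := by
    have d1 : Differentiable ℂ (fun z : Fin 3 → ℂ => (ε:ℂ) * z 0 + Complex.I) :=
      ((hcoord 0).const_mul _).add_const _
    have d2 : Differentiable ℂ (fun z : Fin 3 → ℂ => (ε:ℂ) * (z 0 - z 1) + Complex.I) :=
      (((hcoord 0).sub (hcoord 1)).const_mul _).add_const _
    have d3 : Differentiable ℂ (fun z : Fin 3 → ℂ => (ε:ℂ) * (z 0 + z 2) + Complex.I) :=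
      (((hcoord 0).add (hcoord 2)).const_mul _).add_const _
    exact (d1.mul d2).mul d3
  refine DifferentiableOn.inv hg.differentiableOn ?_
  intro w hw
  have him : (fun i => (w i).im) ∈ Lambda3 := hw
  have key : ∀ u : ℂ, 0 < u.im → (ε:ℂ) * u + Complex.I ≠ 0 := by
    intro u hu h
    have := congrArg Complex.im h
    simp [Complex.add_im, Complex.mul_im] at this
    nlinarith [mul_nonneg hε hu.le]
  refine mul_ne_zero (mul_ne_zero (key _ ?_) (key _ ?_)) (key _ ?_)
  · exact Lambda3_m1 him
  · have := Lambda3_m2 him; simpa [Complex.sub_im] using this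
  · have := Lambda3_m3 him; simpa [Complex.add_im] using this

end RadialCarlesonAux

open RadialCarlesonAux Real Filter

/-- for a nonnegative measurable `φ` on `Λ₃`, the measure
`dμ(x+iy) = φ(y) dx dy` is a Carleson measure for `H²(T_{Λ₃})` iff
`sup_{t ∈ Λ₃} ∫_{Λ₃} φ(y) e^{−2⟨t,y⟩} dy < ∞`. -/
theorem radial_carleson_iff_laplace_bounded
    (φ : (Fin 3 → ℝ) → ℝ) (hφm : Measurable φ) (hφ : ∀ y, 0 ≤ φ y) :
    (∃ C : ℝ, 0 < C ∧ ∀ F : (Fin 3 → ℂ) → ℂ,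
        DifferentiableOn ℂ F TLambda3 → hardyNormSq F < ⊤ →
        (∫⁻ y in Lambda3,
            (∫⁻ x : Fin 3 → ℝ,
              (‖F (fun i => (x i : ℂ) + (y i : ℂ) * Complex.I)‖₊ : ℝ≥0∞) ^ 2)
              * ENNReal.ofReal (φ y))
          ≤ ENNReal.ofReal C * hardyNormSq F)
    ↔ (⨆ t ∈ Lambda3,
        ∫⁻ y in Lambda3,
          ENNReal.ofReal (φ y * Real.exp (-2 * ∑ i : Fin 3, t i * y i))) < ⊤ := by
  constructor
  · rintro ⟨C, hC, hcar⟩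
    -- Step 1: for each n, test against `Feps (n+1)⁻¹` to get a uniform bound.
    have key : ∀ n : ℕ, (∫⁻ y in Lambda3, ENNReal.ofReal
        ((((n:ℝ)+1)⁻¹*(y 0)+1)⁻¹ * (((n:ℝ)+1)⁻¹*(y 0 - y 1)+1)⁻¹
          * (((n:ℝ)+1)⁻¹*(y 0 + y 2)+1)⁻¹ * φ y))
        ≤ ENNReal.ofReal C := by
      intro n
      set ε : ℝ := ((n:ℝ)+1)⁻¹ with hεdef
      have hε : 0 < ε := by positivity
      have hN : ∀ y ∈ Lambda3,
          (∫⁻ x : Fin 3 → ℝ,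
            (‖Feps ε (fun i => (x i : ℂ) + (y i : ℂ) * Complex.I)‖₊ : ℝ≥0∞) ^ 2)
          = ENNReal.ofReal (π/(ε*(ε*(y 0)+1))) * ENNReal.ofReal (π/(ε*(ε*(y 0 - y 1)+1)))
            * ENNReal.ofReal (π/(ε*(ε*(y 0 + y 2)+1))) := by
        intro y hy
        have b1 : (0:ℝ) < ε*(y 0)+1 := by have := Lambda3_m1 hy; nlinarith
        have b2 : (0:ℝ) < ε*(y 0 - y 1)+1 := by have := Lambda3_m2 hy; nlinarith
        have b3 : (0:ℝ) < ε*(y 0 + y 2)+1 := by have := Lambda3_m3 hy; nlinarith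
        rw [lintegral_congr (fun x => normFeps ε x y)]
        exact lintegral_three ε _ _ _ hε b1 b2 b3
      set Kf : ℝ≥0∞ := ENNReal.ofReal (π/ε) with hKf
      have hKfne : Kf ≠ ⊤ := ENNReal.ofReal_ne_top
      have hKne : Kf*Kf*Kf ≠ ⊤ := ENNReal.mul_ne_top (ENNReal.mul_ne_top hKfne hKfne) hKfne
      have hKf0 : Kf ≠ 0 := by
        simp only [hKf, ne_eq, ENNReal.ofReal_eq_zero, not_le]
        positivity
      have hK0 : Kf*Kf*Kf ≠ 0 := mul_ne_zero (mul_ne_zero hKf0 hKf0) hKf0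
      have hfac : ∀ m : ℝ, 0 ≤ m → ENNReal.ofReal (π/(ε*(ε*m+1))) ≤ Kf := by
        intro m hm
        apply ENNReal.ofReal_le_ofReal
        have h1 : ε ≤ ε*(ε*m+1) := by nlinarith [mul_nonneg (mul_nonneg hε.le hε.le) hm]
        have h2 : (ε*(ε*m+1))⁻¹ ≤ ε⁻¹ := inv_anti₀ hε h1
        rw [div_eq_mul_inv, div_eq_mul_inv]
        exact mul_le_mul_of_nonneg_left h2 pi_pos.le
      have hhardy : hardyNormSq (Feps ε) ≤ Kf*Kf*Kf := by
        refine iSup₂_le fun y hy => ?_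
        rw [hN y hy]
        exact mul_le_mul' (mul_le_mul' (hfac _ (Lambda3_m1 hy).le) (hfac _ (Lambda3_m2 hy).le))
          (hfac _ (Lambda3_m3 hy).le)
      have hfin : hardyNormSq (Feps ε) < ⊤ := lt_of_le_of_lt hhardy (hKne.lt_top)
      have hcar' := hcar (Feps ε) (diffFeps ε hε.le) hfin
      have hLHS : (∫⁻ y in Lambda3,
          (∫⁻ x : Fin 3 → ℝ,
            (‖Feps ε (fun i => (x i : ℂ) + (y i : ℂ) * Complex.I)‖₊ : ℝ≥0∞) ^ 2)
            * ENNReal.ofReal (φ y))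
          = (Kf*Kf*Kf) * ∫⁻ y in Lambda3, ENNReal.ofReal
            ((ε*(y 0)+1)⁻¹ * (ε*(y 0 - y 1)+1)⁻¹ * (ε*(y 0 + y 2)+1)⁻¹ * φ y) := by
        rw [← lintegral_const_mul' _ _ hKne]
        refine setLIntegral_congr_fun measurableSet_Lambda3 (fun y hy => ?_)
        rw [hN y hy]
        have b1 : (0:ℝ) < ε*(y 0)+1 := by have := Lambda3_m1 hy; nlinarith
        have b2 : (0:ℝ) < ε*(y 0 - y 1)+1 := by have := Lambda3_m2 hy; nlinarith
        have b3 : (0:ℝ) < ε*(y 0 + y 2)+1 := by have := Lambda3_m3 hy; nlinarith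
        have hsplit : ∀ b : ℝ, 0 < b → ENNReal.ofReal (π/(ε*b)) = Kf * ENNReal.ofReal b⁻¹ := by
          intro b hb
          rw [hKf, ← ENNReal.ofReal_mul (by positivity)]
          congr 1
          rw [← div_div, div_eq_mul_inv]
        rw [hsplit _ b1, hsplit _ b2, hsplit _ b3]
        rw [ENNReal.ofReal_mul (by positivity), ENNReal.ofReal_mul (by positivity),
          ENNReal.ofReal_mul (by positivity)]
        ring
      rw [hLHS] at hcar'
      have hfinal : (Kf*Kf*Kf) * (∫⁻ y in Lambda3, ENNReal.ofReal
          ((ε*(y 0)+1)⁻¹ * (ε*(y 0 - y 1)+1)⁻¹ * (ε*(y 0 + y 2)+1)⁻¹ * φ y))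
          ≤ (Kf*Kf*Kf) * ENNReal.ofReal C := by
        refine le_trans hcar' ?_
        calc ENNReal.ofReal C * hardyNormSq (Feps ε)
            ≤ ENNReal.ofReal C * (Kf*Kf*Kf) := mul_le_mul_right hhardy _
          _ = (Kf*Kf*Kf) * ENNReal.ofReal C := mul_comm _ _
      exact (ENNReal.mul_le_mul_iff_right hK0 hKne).mp hfinal
    -- Step 2: Fatou along n → ∞ gives integrability of φ on the cone.
    have hφle : (∫⁻ y in Lambda3, ENNReal.ofReal (φ y)) ≤ ENNReal.ofReal C := by
      set f : ℕ → (Fin 3 → ℝ) → ℝ≥0∞ := fun n y => ENNReal.ofReal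
        ((((n:ℝ)+1)⁻¹*(y 0)+1)⁻¹ * (((n:ℝ)+1)⁻¹*(y 0 - y 1)+1)⁻¹
          * (((n:ℝ)+1)⁻¹*(y 0 + y 2)+1)⁻¹ * φ y) with hf
      have hmeas : ∀ n, Measurable (f n) := by
        intro n
        apply Measurable.ennreal_ofReal
        refine Measurable.mul ?_ hφm
        refine Measurable.mul (Measurable.mul ?_ ?_) ?_
        · exact (((measurable_pi_apply 0).const_mul _).add_const _).inv
        · exact ((((measurable_pi_apply 0).sub (measurable_pi_apply 1)).const_mul _).add_const _).inv
        · exact ((((measurable_pi_apply 0).add (measurable_pi_apply 2)).const_mul _).add_const _).inv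
      have hbase : Tendsto (fun n : ℕ => ((n:ℝ)+1)⁻¹) atTop (nhds 0) := by
        simpa only [one_div] using (tendsto_one_div_add_atTop_nhds_zero_nat : Tendsto (fun n : ℕ => 1 / ((n:ℝ) + 1)) atTop (nhds 0))
      have hterm : ∀ m : ℝ, Tendsto (fun n : ℕ => (((n:ℝ)+1)⁻¹*m+1)⁻¹) atTop (nhds 1) := by
        intro m
        have h1 : Tendsto (fun n : ℕ => ((n:ℝ)+1)⁻¹*m+1) atTop (nhds 1) := by
          simpa using (hbase.mul_const m).add_const 1
        simpa using h1.inv₀ (by norm_num)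
      have htend : ∀ y, Tendsto (fun n => f n y) atTop (nhds (ENNReal.ofReal (φ y))) := by
        intro y
        apply ENNReal.tendsto_ofReal
        have := (((hterm (y 0)).mul (hterm (y 0 - y 1))).mul (hterm (y 0 + y 2))).mul_const (φ y)
        simpa using this
      have h1 : (∫⁻ y in Lambda3, ENNReal.ofReal (φ y))
          = ∫⁻ y in Lambda3, Filter.liminf (fun n => f n y) Filter.atTop :=
        lintegral_congr fun y => ((htend y).liminf_eq).symm
      rw [h1]
      refine le_trans (lintegral_liminf_le hmeas) ?_
      refine le_trans (Filter.liminf_le_liminf (Filter.Eventually.of_forall key)) ?_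
      simp [Filter.liminf_const]
    -- Step 3: the Laplace transforms are dominated by ∫ φ.
    refine lt_of_le_of_lt (iSup₂_le fun t ht => ?_)
      (lt_of_le_of_lt hφle ENNReal.ofReal_lt_top)
    refine lintegral_mono_ae ((ae_restrict_iff' measurableSet_Lambda3).2
      (ae_of_all _ fun y hy => ?_))
    apply ENNReal.ofReal_le_ofReal
    have hexp : Real.exp (-2 * ∑ i : Fin 3, t i * y i) ≤ 1 := by
      rw [Real.exp_le_one_iff]
      have hin := Lambda3_inner_nonneg ht hy
      have hsum : ∑ i : Fin 3, t i * y i = t 0 * y 0 + t 1 * y 1 + t 2 * y 2 :=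
        Fin.sum_univ_three _
      rw [hsum]
      linarith
    calc φ y * Real.exp (-2 * ∑ i : Fin 3, t i * y i) ≤ φ y * 1 :=
          mul_le_mul_of_nonneg_left hexp (hφ y)
      _ = φ y := mul_one _
  · intro hS
    set S := ⨆ t ∈ Lambda3, ∫⁻ y in Lambda3,
      ENNReal.ofReal (φ y * Real.exp (-2 * ∑ i : Fin 3, t i * y i)) with hSdef
    have hSne : S ≠ ⊤ := hS.ne
    -- monotone convergence: ∫_{Λ₃} φ ≤ S
    have hφS : (∫⁻ y in Lambda3, ENNReal.ofReal (φ y)) ≤ S := by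
      set g : ℕ → (Fin 3 → ℝ) → ℝ≥0∞ := fun n y =>
        ENNReal.ofReal (φ y * Real.exp (-2 * (((n:ℝ)+1)⁻¹ * y 0))) with hg
      have hglex : ∀ n, (∫⁻ y in Lambda3, g n y) ≤ S := by
        intro n
        set tn : Fin 3 → ℝ := ![((n:ℝ)+1)⁻¹, 0, 0] with htn'
        have htn : tn ∈ Lambda3 := by
          constructor
          · show (0:ℝ) < tn 0 + tn 1
            simp only [htn', Matrix.cons_val_zero, Matrix.cons_val_one, Matrix.head_cons]
            positivity
          · show (0:ℝ) < (tn 0)^2 - (tn 1)^2 - (tn 2)^2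
            simp only [htn', Matrix.cons_val_zero, Matrix.cons_val_one, Matrix.head_cons,
              Matrix.cons_val_two, Matrix.tail_cons]
            norm_num
            positivity
        have hle := le_iSup₂ (f := fun (t : Fin 3 → ℝ) (_ : t ∈ Lambda3) =>
          ∫⁻ y in Lambda3, ENNReal.ofReal (φ y * Real.exp (-2 * ∑ i : Fin 3, t i * y i)))
          tn htn
        refine le_trans (le_of_eq ?_) hle
        refine lintegral_congr fun y => ?_
        have hsum : ∑ i : Fin 3, tn i * y i = ((n:ℝ)+1)⁻¹ * y 0 := by
          rw [Fin.sum_univ_three]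
          simp only [htn', Matrix.cons_val_zero, Matrix.cons_val_one, Matrix.head_cons,
            Matrix.cons_val_two, Matrix.tail_cons]
          ring
        rw [hg, hsum]
      have hmeasg : ∀ n, AEMeasurable (g n) (volume.restrict Lambda3) := by
        intro n
        refine (Measurable.ennreal_ofReal ?_).aemeasurable
        exact hφm.mul (Real.measurable_exp.comp
          (((measurable_pi_apply (0:Fin 3) : Measurable fun y : Fin 3 → ℝ => y 0).const_mul (((n:ℝ)+1)⁻¹)).const_mul (-2)))
      have hmono : ∀ᵐ y ∂(volume.restrict Lambda3), Monotone fun n => g n y := by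
        refine (ae_restrict_iff' measurableSet_Lambda3).2 (ae_of_all _ fun y hy => ?_)
        intro a b hab
        apply ENNReal.ofReal_le_ofReal
        refine mul_le_mul_of_nonneg_left (Real.exp_le_exp.2 ?_) (hφ y)
        have hy0 := Lambda3_m1 hy
        have hinv : ((b:ℝ)+1)⁻¹ ≤ ((a:ℝ)+1)⁻¹ := by
          apply inv_anti₀ (by positivity)
          have : (a:ℝ) ≤ (b:ℝ) := by exact_mod_cast hab
          linarith
        nlinarith
      have htendg : ∀ᵐ y ∂(volume.restrict Lambda3),
          Tendsto (fun n => g n y) atTop (nhds (ENNReal.ofReal (φ y))) := by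
        refine ae_of_all _ fun y => ?_
        apply ENNReal.tendsto_ofReal
        have hbase : Tendsto (fun n : ℕ => ((n:ℝ)+1)⁻¹) atTop (nhds 0) := by
          simpa only [one_div] using (tendsto_one_div_add_atTop_nhds_zero_nat : Tendsto (fun n : ℕ => 1 / ((n:ℝ) + 1)) atTop (nhds 0))
        have h2 : Tendsto (fun n : ℕ => -2 * (((n:ℝ)+1)⁻¹ * y 0)) atTop (nhds 0) := by
          simpa using (hbase.mul_const (y 0)).const_mul (-2)
        have h3 := (Real.continuous_exp.tendsto 0).comp h2
        simp only [Real.exp_zero] at h3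
        simpa using (tendsto_const_nhds (x := φ y) (f := atTop)).mul h3
      have := lintegral_tendsto_of_tendsto_of_monotone hmeasg hmono htendg
      exact le_of_tendsto this (Filter.Eventually.of_forall hglex)
    refine ⟨S.toReal + 1, by have := ENNReal.toReal_nonneg (a := S); linarith, fun F hFdiff hFfin => ?_⟩
    have hSle : S ≤ ENNReal.ofReal (S.toReal + 1) := by
      conv_lhs => rw [← ENNReal.ofReal_toReal hSne]
      exact ENNReal.ofReal_le_ofReal (by linarith)
    calc (∫⁻ y in Lambda3,
            (∫⁻ x : Fin 3 → ℝ,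
              (‖F (fun i => (x i : ℂ) + (y i : ℂ) * Complex.I)‖₊ : ℝ≥0∞) ^ 2)
              * ENNReal.ofReal (φ y))
        ≤ ∫⁻ y in Lambda3, hardyNormSq F * ENNReal.ofReal (φ y) := by
          refine lintegral_mono_ae ((ae_restrict_iff' measurableSet_Lambda3).2
            (ae_of_all _ fun y hy => ?_))
          refine mul_le_mul_left ?_ _
          exact le_iSup₂ (f := fun (y : Fin 3 → ℝ) (_ : y ∈ Lambda3) =>
            ∫⁻ x : Fin 3 → ℝ,
              (‖F (fun i => (x i : ℂ) + (y i : ℂ) * Complex.I)‖₊ : ℝ≥0∞) ^ 2) y hy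
      _ = hardyNormSq F * ∫⁻ y in Lambda3, ENNReal.ofReal (φ y) :=
          lintegral_const_mul' _ _ hFfin.ne
      _ ≤ hardyNormSq F * ENNReal.ofReal (S.toReal + 1) :=
          mul_le_mul_right (le_trans hφS hSle) _
      _ = ENNReal.ofReal (S.toReal + 1) * hardyNormSq F := mul_comm _ _
end
end

section
/- Let α⃗ = (α₁,α₂) with α₁,α₂ > −1, let 1 < p ≤ q < ∞, and let μ be a positive measure on Π⁺×Π⁺ which is a (q/p, α⃗)-Carleson measure, i.e. there is C₀ > 0 with μ(Q_{I₁}×Q_{I₂}) ≤ C₀ (V_{α₁}(Q_{I₁}) V_{α₂}(Q_{I₂}))^{q/p} for all intervals I₁, I₂. Then there exists a constant C > 0 such that for every f ∈ L^p(Π⁺×Π⁺, dV_{α⃗}), ∫_{Π⁺×Π⁺} (M_{α⃗} f)^q dμ ≤ C (∫_{Π⁺×Π⁺} |f|^p dV_{α⃗})^{q/p}. -/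
/-!
Every Carleson square `Q_I` lies in a square `Q_J` of comparable volume over one of the intervals
`J = (m 2^k, (m + 2) 2^k)`, so `M_{α⃗} f` is dominated by the supremum of the averages of `|f|` over
the countably many boxes `Q_{J₁} × Q_{J₂}`. Bounding the `q`-th power of that supremum by the sum
over boxes, the Carleson condition and `q / p ≥ 1` reduce the claim to the dyadic estimate
`∑ V(Q)^{1-p} (∫_Q g)^p ≲ ∫ g^p`. In one variable this follows from Hölder's inequality with the
weight `y^{c/p}`, `c = (α + 1)(p - 1)/2`, together with `∑_{Q ∋ z} |J|^{-c} ≲ (Im z)^{-c}`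
(at most two squares per scale contain `z`, and only the scales with `2^{k+1} > Im z`); the
two-parameter estimate follows by applying it in each variable (Fubini).
-/
open MeasureTheory Set
open scoped ENNReal NNReal

noncomputable section

/-- The upper half-plane `Π⁺`. -/
def UHP : Set ℂ := {z : ℂ | 0 < z.im}

/-- The weighted measure `dV_α(x+iy) = y^α dx dy` on the upper half-plane. -/
def Vm (α : ℝ) : Measure ℂ :=
  (volume.restrict UHP).withDensity fun z => ENNReal.ofReal (z.im ^ α)

/-- The Carleson square `Q_I = {x+iy : x ∈ I, 0 < y < |I|}` of the interval `I = (a,b)`. -/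
def carlSq (a b : ℝ) : Set ℂ :=
  {z : ℂ | z.re ∈ Set.Ioo a b ∧ z.im ∈ Set.Ioo 0 (b - a)}

/-- The strong maximal function `M_{α⃗} f(z) = sup_R χ_{Q_R}(z) (1/V_{α⃗}(Q_R)) ∫_{Q_R} |f| dV_{α⃗}`,
the supremum being over all rectangles `R = I₁×I₂ ⊂ ℝ²`. -/
def strongMaxFn (α₁ α₂ : ℝ) (f : ℂ × ℂ → ℂ) (z : ℂ × ℂ) : ℝ≥0∞ :=
  ⨆ (a₁ : ℝ) (b₁ : ℝ) (a₂ : ℝ) (b₂ : ℝ) (_ : a₁ < b₁) (_ : a₂ < b₂)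
    (_ : z ∈ carlSq a₁ b₁ ×ˢ carlSq a₂ b₂),
    (∫⁻ w in carlSq a₁ b₁ ×ˢ carlSq a₂ b₂, (‖f w‖₊ : ℝ≥0∞) ∂((Vm α₁).prod (Vm α₂))) /
      ((Vm α₁).prod (Vm α₂)) (carlSq a₁ b₁ ×ˢ carlSq a₂ b₂)

theorem ENNReal.tsum_rpow_le_rpow_tsum {ι : Type*} (a : ι → ℝ≥0∞) {s : ℝ} (hs : 1 ≤ s) :
    ∑' i, a i ^ s ≤ (∑' i, a i) ^ s := by
  have hs₀ : 0 < s := by linarith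
  by_cases htop : ∑' i, a i = ∞
  · simp [htop, ENNReal.top_rpow_of_pos hs₀]
  by_cases hzero : ∑' i, a i = 0
  · simp [ENNReal.tsum_eq_zero.1 hzero, ENNReal.zero_rpow_of_pos hs₀]
  calc ∑' i, a i ^ s ≤ ∑' i, (∑' j, a j) ^ (s - 1) * a i := by
        refine ENNReal.tsum_le_tsum fun i => ?_
        have hai : a i ≤ ∑' j, a j := ENNReal.le_tsum i
        rcases eq_or_ne (a i) 0 with hi | hi
        · simp [hi, ENNReal.zero_rpow_of_pos hs₀]
        calc a i ^ s = a i ^ (s - 1) * a i := by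
              conv_lhs => rw [← sub_add_cancel s 1,
                ENNReal.rpow_add _ _ hi (ne_top_of_le_ne_top htop hai), ENNReal.rpow_one]
          _ ≤ (∑' j, a j) ^ (s - 1) * a i := by gcongr
    _ = (∑' i, a i) ^ s := by
        conv_rhs => rw [← sub_add_cancel s 1, ENNReal.rpow_add _ _ hzero htop, ENNReal.rpow_one]
        exact ENNReal.tsum_mul_left

theorem ENNReal.div_rpow_mul_le_of_le_mul_rpow {N V m C₀ : ℝ≥0∞} (hV₀ : V ≠ 0) (hV : V ≠ ∞)
    {p q : ℝ} (hp : 0 < p) (hq : 0 ≤ q) (hm : m ≤ C₀ * V ^ (q / p)) :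
    (N / V) ^ q * m ≤ C₀ * (N ^ p * V ^ (1 - p)) ^ (q / p) :=
  calc (N / V) ^ q * m ≤ (N / V) ^ q * (C₀ * V ^ (q / p)) := by gcongr
    _ = C₀ * (((N / V) ^ p) ^ (q / p) * V ^ (q / p)) := by
        rw [← ENNReal.rpow_mul, mul_div_cancel₀ _ hp.ne']
        ring
    _ = C₀ * (N ^ p * V ^ (1 - p)) ^ (q / p) := by
        rw [← ENNReal.mul_rpow_of_nonneg _ _ (div_nonneg hq hp.le),
          ENNReal.div_rpow_of_nonneg _ _ hp.le, div_eq_mul_inv, ← ENNReal.rpow_neg, mul_assoc,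
          sub_eq_neg_add, ENNReal.rpow_add _ _ hV₀ hV, ENNReal.rpow_one]

theorem lintegral_iSup_indicator_rpow_le {X ι : Type*} [MeasurableSpace X] [Countable ι]
    (μ : Measure X) {S : ι → Set X} (hS : ∀ i, MeasurableSet (S i)) (a : ι → ℝ≥0∞) {q : ℝ}
    (hq : 0 < q) :
    ∫⁻ x, (⨆ i, (S i).indicator (fun _ => a i) x) ^ q ∂μ ≤ ∑' i, a i ^ q * μ (S i) := by
  calc ∫⁻ x, (⨆ i, (S i).indicator (fun _ => a i) x) ^ q ∂μ
      ≤ ∫⁻ x, ∑' i, (S i).indicator (fun _ => a i ^ q) x ∂μ := by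
        refine lintegral_mono fun x => ?_
        rw [← ENNReal.orderIsoRpow_apply q hq, OrderIso.map_iSup]
        refine iSup_le fun i => le_trans (le_of_eq ?_) (ENNReal.le_tsum i)
        by_cases hx : x ∈ S i <;> simp [hx, ENNReal.zero_rpow_of_pos hq]
    _ = ∑' i, a i ^ q * μ (S i) := by
        rw [lintegral_tsum fun i => (measurable_const.indicator (hS i)).aemeasurable]
        exact tsum_congr fun i => lintegral_indicator_const (hS i) _

theorem tsum_mul_setLIntegral_eq_lintegral {X ι : Type*} [MeasurableSpace X] [Countable ι]
    (ν : Measure X) {S : ι → Set X} (hS : ∀ i, MeasurableSet (S i)) (a : ι → ℝ≥0∞)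
    {F : X → ℝ≥0∞} (hF : Measurable F) :
    ∑' i, a i * ∫⁻ x in S i, F x ∂ν
      = ∫⁻ x, (∑' i, (S i).indicator (fun _ => a i) x) * F x ∂ν := by
  simp_rw [← ENNReal.tsum_mul_right, ← Set.indicator_mul_left]
  rw [lintegral_tsum fun i => ((hF.const_mul _).indicator (hS i)).aemeasurable]
  refine tsum_congr fun i => ?_
  rw [lintegral_indicator (hS i), lintegral_const_mul _ hF]

theorem ENNReal.rpow_lintegral_le_of_mul_eq_one {X : Type*} [MeasurableSpace X] {ν : Measure X}
    {p : ℝ} (hp : 1 < p) {g w v : X → ℝ≥0∞} (hgw : AEMeasurable (fun x => g x * w x) ν)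
    (hv : AEMeasurable v ν) (hwv : ∀ᵐ x ∂ν, w x * v x = 1) :
    (∫⁻ x, g x ∂ν) ^ p
      ≤ (∫⁻ x, (g x * w x) ^ p ∂ν) * (∫⁻ x, v x ^ p.conjExponent ∂ν) ^ (p - 1) := by
  have hp₀ : 0 < p := by linarith
  have hexp : 1 / p.conjExponent * p = p - 1 := by
    rw [Real.conjExponent, one_div_div]; field_simp
  calc (∫⁻ x, g x ∂ν) ^ p = (∫⁻ x, ((fun x => g x * w x) * v) x ∂ν) ^ p := by
        congr 1
        refine lintegral_congr_ae (hwv.mono fun x hx => ?_)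
        simp only [Pi.mul_apply, mul_assoc, hx, mul_one]
    _ ≤ ((∫⁻ x, (g x * w x) ^ p ∂ν) ^ (1 / p) * (∫⁻ x, v x ^ p.conjExponent ∂ν) ^
          (1 / p.conjExponent)) ^ p := by
        gcongr
        exact ENNReal.lintegral_mul_le_Lp_mul_Lq ν (.conjExponent hp) hgw hv
    _ = (∫⁻ x, (g x * w x) ^ p ∂ν) * (∫⁻ x, v x ^ p.conjExponent ∂ν) ^ (p - 1) := by
        rw [ENNReal.mul_rpow_of_nonneg _ _ hp₀.le, ← ENNReal.rpow_mul, ← ENNReal.rpow_mul, hexp,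
          one_div_mul_cancel hp₀.ne', ENNReal.rpow_one]

theorem tsum_rpow_setLIntegral_prod_le {X Y ι κ : Type*} [MeasurableSpace X] [MeasurableSpace Y]
    [Countable ι] [Countable κ] {ν₁ : Measure X} {ν₂ : Measure Y} [SFinite ν₁] [SFinite ν₂]
    {S : ι → Set X} {T : κ → Set Y} {p : ℝ} {C₁ C₂ : ℝ≥0∞}
    (h₁ : ∀ g : X → ℝ≥0∞, Measurable g →
      ∑' i, ν₁ (S i) ^ (1 - p) * (∫⁻ x in S i, g x ∂ν₁) ^ p ≤ C₁ * ∫⁻ x, g x ^ p ∂ν₁)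
    (h₂ : ∀ g : Y → ℝ≥0∞, Measurable g →
      ∑' j, ν₂ (T j) ^ (1 - p) * (∫⁻ y in T j, g y ∂ν₂) ^ p ≤ C₂ * ∫⁻ y, g y ^ p ∂ν₂)
    {g : X × Y → ℝ≥0∞} (hg : Measurable g) :
    ∑' n : ι × κ, ν₁ (S n.1) ^ (1 - p) * ν₂ (T n.2) ^ (1 - p)
        * (∫⁻ w in S n.1 ×ˢ T n.2, g w ∂ν₁.prod ν₂) ^ p
      ≤ C₁ * C₂ * ∫⁻ w, g w ^ p ∂ν₁.prod ν₂ := by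
  set h : κ → X → ℝ≥0∞ := fun j x => ∫⁻ y in T j, g (x, y) ∂ν₂
  have hh : ∀ j, Measurable (h j) := fun j => hg.lintegral_prod_right'
  calc ∑' n : ι × κ, ν₁ (S n.1) ^ (1 - p) * ν₂ (T n.2) ^ (1 - p)
        * (∫⁻ w in S n.1 ×ˢ T n.2, g w ∂ν₁.prod ν₂) ^ p
      = ∑' j, ν₂ (T j) ^ (1 - p) * ∑' i, ν₁ (S i) ^ (1 - p) * (∫⁻ x in S i, h j x ∂ν₁) ^ p := by
        rw [ENNReal.tsum_prod', ENNReal.tsum_comm]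
        refine tsum_congr fun j => ?_
        rw [← ENNReal.tsum_mul_left]
        refine tsum_congr fun i => ?_
        rw [← Measure.prod_restrict, lintegral_prod _ hg.aemeasurable]
        ring
    _ ≤ ∑' j, ν₂ (T j) ^ (1 - p) * (C₁ * ∫⁻ x, h j x ^ p ∂ν₁) := by
        gcongr with j
        exact h₁ _ (hh j)
    _ = C₁ * ∫⁻ x, ∑' j, ν₂ (T j) ^ (1 - p) * h j x ^ p ∂ν₁ := by
        rw [lintegral_tsum fun j => ((hh j).pow_const p).const_mul _ |>.aemeasurable,
          ← ENNReal.tsum_mul_left]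
        refine tsum_congr fun j => ?_
        rw [lintegral_const_mul _ ((hh j).pow_const p)]
        ring
    _ ≤ C₁ * ∫⁻ x, C₂ * ∫⁻ y, g (x, y) ^ p ∂ν₂ ∂ν₁ := by
        gcongr with x
        exact h₂ _ (hg.comp measurable_prodMk_left)
    _ = C₁ * C₂ * ∫⁻ w, g w ^ p ∂ν₁.prod ν₂ := by
        rw [lintegral_prod _ (hg.pow_const p).aemeasurable,
          lintegral_const_mul _ (hg.pow_const p).lintegral_prod_right', mul_assoc]

instance (α : ℝ) : SFinite (Vm α) := by unfold Vm; infer_instance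

lemma measurableSet_UHP : MeasurableSet UHP :=
  measurableSet_lt measurable_const Complex.measurable_im

lemma carlSq_eq_preimage (a b : ℝ) :
    carlSq a b = Complex.measurableEquivRealProd ⁻¹' (Ioo a b ×ˢ Ioo 0 (b - a)) := by
  ext z
  simp [carlSq, Complex.measurableEquivRealProd_apply]

lemma measurableSet_carlSq (a b : ℝ) : MeasurableSet (carlSq a b) := by
  rw [carlSq_eq_preimage]
  exact Complex.measurableEquivRealProd.measurable (measurableSet_Ioo.prod measurableSet_Ioo)

lemma carlSq_subset_UHP (a b : ℝ) : carlSq a b ⊆ UHP := fun _ hz => hz.2.1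

lemma ae_im_pos_Vm (α : ℝ) : ∀ᵐ z ∂Vm α, 0 < z.im :=
  (withDensity_absolutelyContinuous _ _).ae_le (ae_restrict_mem measurableSet_UHP)

lemma setLIntegral_Vm (α : ℝ) {S : Set ℂ} (hS : MeasurableSet S) (hSU : S ⊆ UHP)
    {g : ℂ → ℝ≥0∞} (hg : Measurable g) :
    ∫⁻ z in S, g z ∂Vm α = ∫⁻ z in S, ENNReal.ofReal (z.im ^ α) * g z := by
  rw [Vm, restrict_withDensity hS, lintegral_withDensity_eq_lintegral_mul _
    (Complex.measurable_im.pow_const α).ennreal_ofReal hg,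
    Measure.restrict_restrict hS, inter_eq_self_of_subset_left hSU]
  rfl

lemma setLIntegral_carlSq_im_rpow {γ : ℝ} (hγ : -1 < γ) {a b : ℝ} (hab : a < b) :
    ∫⁻ z in carlSq a b, ENNReal.ofReal (z.im ^ γ)
      = ENNReal.ofReal ((b - a) ^ (γ + 2) / (γ + 1)) := by
  have hl : 0 < b - a := sub_pos.2 hab
  have hγ1 : 0 < γ + 1 := by linarith
  have hheight : ∫⁻ y in Ioo 0 (b - a), ENNReal.ofReal (y ^ γ)
      = ENNReal.ofReal ((b - a) ^ (γ + 1) / (γ + 1)) := by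
    rw [setLIntegral_congr Ioo_ae_eq_Ioc, ← ofReal_integral_eq_lintegral_ofReal,
      ← intervalIntegral.integral_of_le hl.le, integral_rpow (Or.inl hγ),
      Real.zero_rpow hγ1.ne', sub_zero]
    · exact (intervalIntegral.intervalIntegrable_rpow' hγ).1
    · filter_upwards [ae_restrict_mem measurableSet_Ioc] with y hy
      exact Real.rpow_nonneg hy.1.le _
  rw [carlSq_eq_preimage]
  refine (Complex.volume_preserving_equiv_real_prod.setLIntegral_comp_preimage_emb
    Complex.measurableEquivRealProd.measurableEmbedding
    (fun p : ℝ × ℝ => ENNReal.ofReal (p.2 ^ γ)) _).trans ?_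
  rw [Measure.volume_eq_prod, ← Measure.prod_restrict,
    lintegral_prod _ (measurable_snd.pow_const γ).ennreal_ofReal.aemeasurable]
  simp only [hheight, lintegral_const, Measure.restrict_apply_univ, Real.volume_Ioo,
    ← ENNReal.ofReal_mul (by positivity : 0 ≤ (b - a) ^ (γ + 1) / (γ + 1))]
  congr 1
  rw [div_mul_eq_mul_div, ← Real.rpow_add_one hl.ne']
  ring_nf

lemma setLIntegral_carlSq_Vm_im_rpow {α β : ℝ} (hαβ : -1 < α + β) {a b : ℝ} (hab : a < b) :
    ∫⁻ z in carlSq a b, ENNReal.ofReal (z.im ^ β) ∂Vm α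
      = ENNReal.ofReal ((b - a) ^ (α + β + 2) / (α + β + 1)) := by
  rw [setLIntegral_Vm α (measurableSet_carlSq a b) (carlSq_subset_UHP a b)
    (Complex.measurable_im.pow_const β).ennreal_ofReal, ← setLIntegral_carlSq_im_rpow hαβ hab]
  refine setLIntegral_congr_fun (measurableSet_carlSq a b) fun z hz => ?_
  rw [← ENNReal.ofReal_mul (Real.rpow_nonneg hz.2.1.le _), ← Real.rpow_add hz.2.1]

lemma Vm_carlSq {α : ℝ} (hα : -1 < α) {a b : ℝ} (hab : a < b) :
    Vm α (carlSq a b) = ENNReal.ofReal ((b - a) ^ (α + 2) / (α + 1)) := by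
  have h := setLIntegral_carlSq_Vm_im_rpow (β := 0) (by simpa using hα) hab
  simp_rw [Real.rpow_zero, ENNReal.ofReal_one, add_zero] at h
  rwa [setLIntegral_const, one_mul] at h

lemma Vm_carlSq_le_of_sub_le {α : ℝ} (hα : -1 < α) {a b a' b' t : ℝ} (hab : a < b)
    (ha'b' : a' < b') (hlen : b' - a' ≤ t * (b - a)) :
    Vm α (carlSq a' b') ≤ ENNReal.ofReal (t ^ (α + 2)) * Vm α (carlSq a b) := by
  have hl : 0 < b - a := sub_pos.2 hab
  have ht : 0 ≤ t := nonneg_of_mul_nonneg_left ((sub_pos.2 ha'b').le.trans hlen) hl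
  rw [Vm_carlSq hα hab, Vm_carlSq hα ha'b', ← ENNReal.ofReal_mul (by positivity)]
  refine ENNReal.ofReal_le_ofReal ?_
  rw [← mul_div_assoc, ← Real.mul_rpow ht hl.le]
  gcongr <;> linarith

/-- The Carleson square over `(m 2^k, (m + 2) 2^k)`, for `n = (k, m)`. As `m` runs over all of `ℤ`,
these intervals overlap, and every interval lies in one of them at most four times as long. -/
def dyadicSq (n : ℤ × ℤ) : Set ℂ := carlSq (n.2 * 2 ^ n.1) ((n.2 + 2) * 2 ^ n.1)

lemma dyadicSq_length (n : ℤ × ℤ) :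
    ((n.2 : ℝ) + 2) * 2 ^ n.1 - n.2 * 2 ^ n.1 = 2 * 2 ^ n.1 := by ring

lemma dyadicSq_left_lt_right (n : ℤ × ℤ) : (n.2 : ℝ) * 2 ^ n.1 < (n.2 + 2) * 2 ^ n.1 := by
  have := dyadicSq_length n
  have : (0 : ℝ) < 2 ^ n.1 := by positivity
  linarith

lemma measurableSet_dyadicSq (n : ℤ × ℤ) : MeasurableSet (dyadicSq n) :=
  measurableSet_carlSq _ _

lemma Vm_dyadicSq_ne_zero {α : ℝ} (hα : -1 < α) (n : ℤ × ℤ) : Vm α (dyadicSq n) ≠ 0 := by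
  have : 0 < α + 1 := by linarith
  rw [dyadicSq, Vm_carlSq hα (dyadicSq_left_lt_right n), dyadicSq_length,
    ENNReal.ofReal_ne_zero_iff]
  positivity

lemma Vm_dyadicSq_ne_top {α : ℝ} (hα : -1 < α) (n : ℤ × ℤ) : Vm α (dyadicSq n) ≠ ∞ := by
  rw [dyadicSq, Vm_carlSq hα (dyadicSq_left_lt_right n)]
  exact ENNReal.ofReal_ne_top

lemma exists_carlSq_subset_dyadicSq {α : ℝ} (hα : -1 < α) {a b : ℝ} (hab : a < b) :
    ∃ n, carlSq a b ⊆ dyadicSq n ∧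
      Vm α (dyadicSq n) ≤ ENNReal.ofReal (4 ^ (α + 2)) * Vm α (carlSq a b) := by
  obtain ⟨k, hk, hk'⟩ := exists_mem_Ioc_zpow (sub_pos.2 hab) one_lt_two
  have hpos : (0 : ℝ) < 2 ^ (k + 1) := by positivity
  set m := ⌊a / 2 ^ (k + 1)⌋
  have hm : m * 2 ^ (k + 1) ≤ a := (le_div_iff₀ hpos).1 (Int.floor_le _)
  have hm' : a < (m + 1) * 2 ^ (k + 1) := (div_lt_iff₀ hpos).1 (Int.lt_floor_add_one _)
  have hdouble : (2 : ℝ) ^ (k + 1) = 2 * 2 ^ k := by rw [zpow_add_one₀ two_ne_zero, mul_comm]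
  refine ⟨(k + 1, m), ?_, Vm_carlSq_le_of_sub_le hα hab (dyadicSq_left_lt_right _) ?_⟩
  · rintro z ⟨⟨hre, hre'⟩, him, him'⟩
    exact ⟨⟨by linarith, by linarith⟩, him, by linarith⟩
  · rw [dyadicSq_length]
    linarith

lemma im_lt_of_mem_dyadicSq {z : ℂ} {n : ℤ × ℤ} (hz : z ∈ dyadicSq n) : z.im < 2 * 2 ^ n.1 :=
  dyadicSq_length n ▸ hz.2.2

lemma tsum_indicator_dyadicSq_scale_le (k : ℤ) (w : ℝ≥0∞) (z : ℂ) :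
    ∑' m : ℤ, (dyadicSq (k, m)).indicator (fun _ => w) z
      ≤ if z.im < 2 * 2 ^ k then 2 * w else 0 := by
  split_ifs with hk
  · set M := ⌊z.re / 2 ^ k⌋
    have hmem : ∀ m, z ∈ dyadicSq (k, m) → m = M - 1 ∨ m = M := by
      rintro m ⟨⟨hlo, hhi⟩, -⟩
      have hlo' : (m : ℝ) < z.re / 2 ^ k := (lt_div_iff₀ (by positivity)).2 hlo
      have hhi' : z.re / 2 ^ k < m + 2 := (div_lt_iff₀ (by positivity)).2 hhi
      have h₁ : m ≤ M := Int.le_floor.2 hlo'.le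
      have h₂ : M < m + 2 := by exact_mod_cast (Int.floor_le _).trans_lt hhi'
      omega
    calc ∑' m : ℤ, (dyadicSq (k, m)).indicator (fun _ => w) z
        ≤ ∑' m : ℤ, ((if m = M - 1 then w else 0) + (if m = M then w else 0)) := by
          refine ENNReal.tsum_le_tsum fun m => ?_
          by_cases hz : z ∈ dyadicSq (k, m)
          · rcases hmem m hz with rfl | rfl <;> simp [hz]
          · simp [hz]
      _ = 2 * w := by rw [ENNReal.tsum_add, tsum_ite_eq, tsum_ite_eq, two_mul]
  · refine (ENNReal.tsum_eq_zero.2 fun m => ?_).le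
    exact indicator_of_notMem (fun hz => hk (im_lt_of_mem_dyadicSq hz)) _

lemma tsum_ite_lt_two_mul_zpow_rpow_le {y c : ℝ} (hy : 0 < y) (hc : 0 < c) :
    ∑' k : ℤ, (if y < 2 * 2 ^ k then ENNReal.ofReal ((2 * 2 ^ k : ℝ) ^ (-c)) else 0)
      ≤ ENNReal.ofReal (y ^ (-c)) * (1 - ENNReal.ofReal (2 ^ (-c)))⁻¹ := by
  obtain ⟨k₀, hk₀, hk₀'⟩ := exists_mem_Ico_zpow hy one_lt_two
  have hinj : Function.Injective fun j : ℕ => k₀ + j := fun i j h => by simpa using h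
  rw [← hinj.tsum_eq fun k hk => ?support]
  case support =>
    have hk : y < 2 ^ (k + 1) := by
      rw [zpow_add_one₀ two_ne_zero, mul_comm]
      by_contra h
      exact hk (if_neg h)
    have : k₀ < k + 1 := (zpow_lt_zpow_iff_right₀ one_lt_two).1 (hk₀.trans_lt hk)
    exact ⟨(k - k₀).toNat, by simp only; omega⟩
  rw [← ENNReal.tsum_geometric, ← ENNReal.tsum_mul_left]
  refine ENNReal.tsum_le_tsum fun j => ?_
  split_ifs
  · rw [← ENNReal.ofReal_pow (by positivity), ← ENNReal.ofReal_mul (by positivity)]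
    refine ENNReal.ofReal_le_ofReal ?_
    have hscale : y * 2 ^ j ≤ 2 * 2 ^ (k₀ + j) := by
      rw [zpow_add₀ two_ne_zero, zpow_natCast, ← mul_assoc, mul_comm 2, ← zpow_add_one₀ two_ne_zero]
      gcongr
    calc (2 * 2 ^ (k₀ + j) : ℝ) ^ (-c) ≤ (y * 2 ^ j) ^ (-c) :=
          Real.rpow_le_rpow_of_nonpos (by positivity) hscale (by linarith)
      _ = y ^ (-c) * (2 ^ (-c)) ^ j := by
          rw [Real.mul_rpow hy.le (by positivity), ← Real.rpow_natCast, ← Real.rpow_natCast,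
            ← Real.rpow_mul zero_le_two, ← Real.rpow_mul zero_le_two]
          ring_nf
  · exact zero_le

lemma tsum_indicator_dyadicSq_le {c : ℝ} (hc : 0 < c) {z : ℂ} (hz : 0 < z.im) :
    ∑' n : ℤ × ℤ, (dyadicSq n).indicator (fun _ => ENNReal.ofReal ((2 * 2 ^ n.1 : ℝ) ^ (-c))) z
      ≤ 2 * (1 - ENNReal.ofReal (2 ^ (-c)))⁻¹ * ENNReal.ofReal (z.im ^ (-c)) :=
  calc ∑' n : ℤ × ℤ, (dyadicSq n).indicator (fun _ => ENNReal.ofReal ((2 * 2 ^ n.1 : ℝ) ^ (-c))) z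
      = ∑' (k : ℤ) (m : ℤ),
          (dyadicSq (k, m)).indicator (fun _ => ENNReal.ofReal ((2 * 2 ^ k : ℝ) ^ (-c))) z :=
        ENNReal.tsum_prod'
    _ ≤ ∑' k : ℤ, 2 * if z.im < 2 * 2 ^ k then ENNReal.ofReal ((2 * 2 ^ k : ℝ) ^ (-c)) else 0 :=
        ENNReal.tsum_le_tsum fun k => (tsum_indicator_dyadicSq_scale_le k _ z).trans
          (by split_ifs <;> simp)
    _ ≤ 2 * (ENNReal.ofReal (z.im ^ (-c)) * (1 - ENNReal.ofReal (2 ^ (-c)))⁻¹) := by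
        rw [ENNReal.tsum_mul_left]
        gcongr
        exact tsum_ite_lt_two_mul_zpow_rpow_le hz hc
    _ = 2 * (1 - ENNReal.ofReal (2 ^ (-c)))⁻¹ * ENNReal.ofReal (z.im ^ (-c)) := by ring

lemma Vm_carlSq_rpow_mul_setLIntegral_rpow_eq {α : ℝ} (hα : -1 < α) (p : ℝ) {a b : ℝ}
    (hab : a < b) :
    Vm α (carlSq a b) ^ (1 - p)
        * (∫⁻ z in carlSq a b, ENNReal.ofReal (z.im ^ (-((α + 1) / 2))) ∂Vm α) ^ (p - 1)
      = ENNReal.ofReal (2 ^ (p - 1) * (b - a) ^ (-((α + 1) * (p - 1) / 2))) := by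
  have hL : 0 < b - a := sub_pos.2 hab
  have hα₁ : 0 < α + 1 := by linarith
  have hsplit : ((b - a) ^ (α + 2) / (α + 1))⁻¹ * ((b - a) ^ ((α + 3) / 2) / ((α + 1) / 2))
      = 2 * (b - a) ^ (-((α + 1) / 2)) := by
    rw [Real.rpow_neg hL.le, show α + 2 = (α + 3) / 2 + (α + 1) / 2 by ring, Real.rpow_add hL]
    field_simp
  rw [setLIntegral_carlSq_Vm_im_rpow (by linarith) hab, Vm_carlSq hα hab,
    show α + -((α + 1) / 2) + 2 = (α + 3) / 2 by ring,
    show α + -((α + 1) / 2) + 1 = (α + 1) / 2 by ring,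
    ENNReal.ofReal_rpow_of_pos (by positivity), ENNReal.ofReal_rpow_of_pos (by positivity),
    ← ENNReal.ofReal_mul (by positivity), show 1 - p = -(p - 1) by ring,
    Real.rpow_neg (by positivity), ← Real.inv_rpow (by positivity),
    ← Real.mul_rpow (by positivity) (by positivity), hsplit,
    Real.mul_rpow zero_le_two (by positivity), ← Real.rpow_mul hL.le]
  ring_nf

lemma Vm_carlSq_rpow_mul_rpow_setLIntegral_le {α p : ℝ} (hα : -1 < α) (hp : 1 < p) {a b : ℝ}
    (hab : a < b) {g : ℂ → ℝ≥0∞} (hg : Measurable g) :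
    Vm α (carlSq a b) ^ (1 - p) * (∫⁻ z in carlSq a b, g z ∂Vm α) ^ p
      ≤ ENNReal.ofReal (2 ^ (p - 1) * (b - a) ^ (-((α + 1) * (p - 1) / 2)))
        * ∫⁻ z in carlSq a b, g z ^ p * ENNReal.ofReal (z.im ^ ((α + 1) * (p - 1) / 2)) ∂Vm α := by
  set c := (α + 1) * (p - 1) / 2
  have hp₀ : 0 < p := by linarith
  have hQ := measurableSet_carlSq a b
  -- Hölder against the weight `y ^ (c / p)`, whose dual power `y ^ (-(α + 1) / 2)` is integrable
  have hHolder := ENNReal.rpow_lintegral_le_of_mul_eq_one hp (ν := (Vm α).restrict (carlSq a b))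
    (g := g) (w := fun z => ENNReal.ofReal (z.im ^ (c / p)))
    (v := fun z => ENNReal.ofReal (z.im ^ (-(c / p)))) (by fun_prop) (by fun_prop)
    ((ae_restrict_mem hQ).mono fun z hz => by
      rw [← ENNReal.ofReal_mul (Real.rpow_nonneg hz.2.1.le _), ← Real.rpow_add hz.2.1,
        add_neg_cancel, Real.rpow_zero, ENNReal.ofReal_one])
  have hweighted : ∫⁻ z in carlSq a b, (g z * ENNReal.ofReal (z.im ^ (c / p))) ^ p ∂Vm α
      = ∫⁻ z in carlSq a b, g z ^ p * ENNReal.ofReal (z.im ^ c) ∂Vm α := by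
    refine setLIntegral_congr_fun hQ fun z hz => ?_
    rw [ENNReal.mul_rpow_of_nonneg _ _ hp₀.le,
      ENNReal.ofReal_rpow_of_nonneg (Real.rpow_nonneg hz.2.1.le _) hp₀.le,
      ← Real.rpow_mul hz.2.1.le, div_mul_cancel₀ _ hp₀.ne']
  have hdual : ∫⁻ z in carlSq a b, ENNReal.ofReal (z.im ^ (-(c / p))) ^ p.conjExponent ∂Vm α
      = ∫⁻ z in carlSq a b, ENNReal.ofReal (z.im ^ (-((α + 1) / 2))) ∂Vm α := by
    have hexp : -(c / p) * p.conjExponent = -((α + 1) / 2) := by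
      have : p - 1 ≠ 0 := by linarith
      simp only [c, Real.conjExponent]
      field_simp
    refine setLIntegral_congr_fun hQ fun z hz => ?_
    rw [ENNReal.ofReal_rpow_of_nonneg (Real.rpow_nonneg hz.2.1.le _)
      (Real.HolderConjugate.conjExponent hp).symm.nonneg, ← Real.rpow_mul hz.2.1.le, hexp]
  rw [hweighted, hdual] at hHolder
  calc Vm α (carlSq a b) ^ (1 - p) * (∫⁻ z in carlSq a b, g z ∂Vm α) ^ p
      ≤ Vm α (carlSq a b) ^ (1 - p)
          * ((∫⁻ z in carlSq a b, g z ^ p * ENNReal.ofReal (z.im ^ c) ∂Vm α)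
            * (∫⁻ z in carlSq a b, ENNReal.ofReal (z.im ^ (-((α + 1) / 2))) ∂Vm α) ^ (p - 1)) := by
        gcongr
    _ = ENNReal.ofReal (2 ^ (p - 1) * (b - a) ^ (-c))
          * ∫⁻ z in carlSq a b, g z ^ p * ENNReal.ofReal (z.im ^ c) ∂Vm α := by
        rw [← Vm_carlSq_rpow_mul_setLIntegral_rpow_eq hα p hab]
        ring

lemma exists_tsum_Vm_dyadicSq_rpow_le {α p : ℝ} (hα : -1 < α) (hp : 1 < p) :
    ∃ C : ℝ≥0∞, C ≠ ∞ ∧ ∀ g : ℂ → ℝ≥0∞, Measurable g →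
      ∑' n, Vm α (dyadicSq n) ^ (1 - p) * (∫⁻ z in dyadicSq n, g z ∂Vm α) ^ p
        ≤ C * ∫⁻ z, g z ^ p ∂Vm α := by
  set c := (α + 1) * (p - 1) / 2
  have hc : 0 < c := by
    have : 0 < α + 1 := by linarith
    have : 0 < p - 1 := by linarith
    positivity
  set ρ := ENNReal.ofReal (2 ^ (-c))
  have hρ : ρ < 1 :=
    ENNReal.ofReal_lt_one.2 (Real.rpow_lt_one_of_one_lt_of_neg one_lt_two (by linarith))
  refine ⟨ENNReal.ofReal (2 ^ (p - 1)) * (2 * (1 - ρ)⁻¹), ?_, fun g hg => ?_⟩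
  · have : (1 - ρ)⁻¹ ≠ ∞ := ENNReal.inv_ne_top.2 (tsub_pos_of_lt hρ).ne'
    finiteness
  have hG : Measurable fun z : ℂ => g z ^ p * ENNReal.ofReal (z.im ^ c) :=
    (hg.pow_const p).mul (Complex.measurable_im.pow_const c).ennreal_ofReal
  calc ∑' n, Vm α (dyadicSq n) ^ (1 - p) * (∫⁻ z in dyadicSq n, g z ∂Vm α) ^ p
      ≤ ∑' n : ℤ × ℤ, ENNReal.ofReal (2 ^ (p - 1)) * (ENNReal.ofReal ((2 * 2 ^ n.1 : ℝ) ^ (-c))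
          * ∫⁻ z in dyadicSq n, g z ^ p * ENNReal.ofReal (z.im ^ c) ∂Vm α) := by
        refine ENNReal.tsum_le_tsum fun n => ?_
        rw [← mul_assoc, ← ENNReal.ofReal_mul (by positivity), ← dyadicSq_length]
        exact Vm_carlSq_rpow_mul_rpow_setLIntegral_le hα hp (dyadicSq_left_lt_right n) hg
    _ = ENNReal.ofReal (2 ^ (p - 1)) * ∫⁻ z, (∑' n : ℤ × ℤ, (dyadicSq n).indicator
          (fun _ => ENNReal.ofReal ((2 * 2 ^ n.1 : ℝ) ^ (-c))) z)
          * (g z ^ p * ENNReal.ofReal (z.im ^ c)) ∂Vm α := by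
        rw [ENNReal.tsum_mul_left, tsum_mul_setLIntegral_eq_lintegral _ measurableSet_dyadicSq _ hG]
    _ ≤ ENNReal.ofReal (2 ^ (p - 1)) * ∫⁻ z, 2 * (1 - ρ)⁻¹ * g z ^ p ∂Vm α := by
        gcongr 1
        refine lintegral_mono_ae ((ae_im_pos_Vm α).mono fun z hz => ?_)
        calc (∑' n : ℤ × ℤ, (dyadicSq n).indicator
              (fun _ => ENNReal.ofReal ((2 * 2 ^ n.1 : ℝ) ^ (-c))) z)
              * (g z ^ p * ENNReal.ofReal (z.im ^ c))
            ≤ 2 * (1 - ρ)⁻¹ * ENNReal.ofReal (z.im ^ (-c))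
              * (g z ^ p * ENNReal.ofReal (z.im ^ c)) := by
              gcongr
              exact tsum_indicator_dyadicSq_le hc hz
          _ = 2 * (1 - ρ)⁻¹ * g z ^ p := by
              rw [mul_mul_mul_comm, ← ENNReal.ofReal_mul (by positivity), ← Real.rpow_add hz,
                neg_add_cancel, Real.rpow_zero, ENNReal.ofReal_one, mul_one]
    _ = ENNReal.ofReal (2 ^ (p - 1)) * (2 * (1 - ρ)⁻¹) * ∫⁻ z, g z ^ p ∂Vm α := by
        rw [lintegral_const_mul _ (hg.pow_const p)]
        ring

lemma strongMaxFn_congr_ae {α₁ α₂ : ℝ} {f f' : ℂ × ℂ → ℂ}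
    (h : f =ᵐ[(Vm α₁).prod (Vm α₂)] f') : strongMaxFn α₁ α₂ f = strongMaxFn α₁ α₂ f' := by
  have hint : ∀ S : Set (ℂ × ℂ), ∫⁻ w in S, (‖f w‖₊ : ℝ≥0∞) ∂(Vm α₁).prod (Vm α₂)
      = ∫⁻ w in S, (‖f' w‖₊ : ℝ≥0∞) ∂(Vm α₁).prod (Vm α₂) := fun S =>
    lintegral_congr_ae (ae_restrict_of_ae (h.mono fun w hw => by simp only [hw]))
  ext z
  simp only [strongMaxFn, hint]

lemma strongMaxFn_le_iSup_dyadic {α₁ α₂ : ℝ} (hα₁ : -1 < α₁) (hα₂ : -1 < α₂)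
    (f : ℂ × ℂ → ℂ) (z : ℂ × ℂ) :
    strongMaxFn α₁ α₂ f z ≤ ⨆ n : (ℤ × ℤ) × (ℤ × ℤ), (dyadicSq n.1 ×ˢ dyadicSq n.2).indicator
      (fun _ => ENNReal.ofReal (4 ^ (α₁ + 2)) * ENNReal.ofReal (4 ^ (α₂ + 2)) *
        ((∫⁻ w in dyadicSq n.1 ×ˢ dyadicSq n.2, (‖f w‖₊ : ℝ≥0∞) ∂(Vm α₁).prod (Vm α₂)) /
          (Vm α₁ (dyadicSq n.1) * Vm α₂ (dyadicSq n.2)))) z := by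
  simp only [strongMaxFn, iSup_le_iff]
  intro a₁ b₁ a₂ b₂ h₁ h₂ hz
  obtain ⟨n₁, hsub₁, hV₁⟩ := exists_carlSq_subset_dyadicSq hα₁ h₁
  obtain ⟨n₂, hsub₂, hV₂⟩ := exists_carlSq_subset_dyadicSq hα₂ h₂
  set κ := ENNReal.ofReal (4 ^ (α₁ + 2)) * ENNReal.ofReal (4 ^ (α₂ + 2))
  have hκ₀ : κ ≠ 0 := mul_ne_zero (ENNReal.ofReal_ne_zero_iff.2 (by positivity))
    (ENNReal.ofReal_ne_zero_iff.2 (by positivity))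
  have hκ : κ ≠ ∞ := by finiteness
  refine le_iSup_of_le (n₁, n₂) ?_
  rw [indicator_of_mem (show z ∈ dyadicSq n₁ ×ˢ dyadicSq n₂ from ⟨hsub₁ hz.1, hsub₂ hz.2⟩),
    Measure.prod_prod]
  calc (∫⁻ w in carlSq a₁ b₁ ×ˢ carlSq a₂ b₂, (‖f w‖₊ : ℝ≥0∞) ∂(Vm α₁).prod (Vm α₂))
        / (Vm α₁ (carlSq a₁ b₁) * Vm α₂ (carlSq a₂ b₂))
      ≤ κ * (∫⁻ w in dyadicSq n₁ ×ˢ dyadicSq n₂, (‖f w‖₊ : ℝ≥0∞) ∂(Vm α₁).prod (Vm α₂))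
        / (κ * (Vm α₁ (carlSq a₁ b₁) * Vm α₂ (carlSq a₂ b₂))) := by
        rw [ENNReal.mul_div_mul_left _ _ hκ₀ hκ]
        gcongr
    _ ≤ κ * (∫⁻ w in dyadicSq n₁ ×ˢ dyadicSq n₂, (‖f w‖₊ : ℝ≥0∞) ∂(Vm α₁).prod (Vm α₂))
        / (Vm α₁ (dyadicSq n₁) * Vm α₂ (dyadicSq n₂)) := by
        refine ENNReal.div_le_div_left ?_ _
        calc Vm α₁ (dyadicSq n₁) * Vm α₂ (dyadicSq n₂)
            ≤ ENNReal.ofReal (4 ^ (α₁ + 2)) * Vm α₁ (carlSq a₁ b₁)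
              * (ENNReal.ofReal (4 ^ (α₂ + 2)) * Vm α₂ (carlSq a₂ b₂)) := mul_le_mul' hV₁ hV₂
          _ = κ * (Vm α₁ (carlSq a₁ b₁) * Vm α₂ (carlSq a₂ b₂)) := by ring
    _ = _ := mul_div_assoc _ _ _

lemma lintegral_strongMaxFn_rpow_le {α₁ α₂ p q : ℝ} (hα₁ : -1 < α₁) (hα₂ : -1 < α₂)
    (hp : 0 < p) (hpq : p ≤ q) {μ : Measure (ℂ × ℂ)} {C₀ C : ℝ≥0∞}
    (hcarl : ∀ n : (ℤ × ℤ) × (ℤ × ℤ), μ (dyadicSq n.1 ×ˢ dyadicSq n.2)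
      ≤ C₀ * (Vm α₁ (dyadicSq n.1) * Vm α₂ (dyadicSq n.2)) ^ (q / p))
    (hC : ∀ g : ℂ × ℂ → ℝ≥0∞, Measurable g →
      ∑' n : (ℤ × ℤ) × (ℤ × ℤ), Vm α₁ (dyadicSq n.1) ^ (1 - p) * Vm α₂ (dyadicSq n.2) ^ (1 - p)
        * (∫⁻ w in dyadicSq n.1 ×ˢ dyadicSq n.2, g w ∂(Vm α₁).prod (Vm α₂)) ^ p
        ≤ C * ∫⁻ w, g w ^ p ∂(Vm α₁).prod (Vm α₂))
    {f : ℂ × ℂ → ℂ} (hf : Measurable f) :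
    ∫⁻ z, strongMaxFn α₁ α₂ f z ^ q ∂μ
      ≤ (ENNReal.ofReal (4 ^ (α₁ + 2)) * ENNReal.ofReal (4 ^ (α₂ + 2))) ^ q * C₀ * C ^ (q / p)
        * (∫⁻ z, (‖f z‖₊ : ℝ≥0∞) ^ p ∂(Vm α₁).prod (Vm α₂)) ^ (q / p) := by
  have hq : 0 < q := hp.trans_le hpq
  let κ := ENNReal.ofReal (4 ^ (α₁ + 2)) * ENNReal.ofReal (4 ^ (α₂ + 2))
  let V : (ℤ × ℤ) × (ℤ × ℤ) → ℝ≥0∞ := fun n => Vm α₁ (dyadicSq n.1) * Vm α₂ (dyadicSq n.2)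
  let N : (ℤ × ℤ) × (ℤ × ℤ) → ℝ≥0∞ := fun n =>
    ∫⁻ w in dyadicSq n.1 ×ˢ dyadicSq n.2, (‖f w‖₊ : ℝ≥0∞) ∂(Vm α₁).prod (Vm α₂)
  have hV₁ (n : (ℤ × ℤ) × (ℤ × ℤ)) := Vm_dyadicSq_ne_top hα₁ n.1
  have hV₂ (n : (ℤ × ℤ) × (ℤ × ℤ)) := Vm_dyadicSq_ne_top hα₂ n.2
  have hV₀ (n : (ℤ × ℤ) × (ℤ × ℤ)) : V n ≠ 0 :=
    mul_ne_zero (Vm_dyadicSq_ne_zero hα₁ n.1) (Vm_dyadicSq_ne_zero hα₂ n.2)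
  calc ∫⁻ z, strongMaxFn α₁ α₂ f z ^ q ∂μ
      ≤ ∫⁻ z, (⨆ n, (dyadicSq n.1 ×ˢ dyadicSq n.2).indicator (fun _ => κ * (N n / V n)) z) ^ q ∂μ :=
        lintegral_mono fun z => by gcongr; exact strongMaxFn_le_iSup_dyadic hα₁ hα₂ f z
    _ ≤ ∑' n, (κ * (N n / V n)) ^ q * μ (dyadicSq n.1 ×ˢ dyadicSq n.2) :=
        lintegral_iSup_indicator_rpow_le μ (fun n : (ℤ × ℤ) × (ℤ × ℤ) =>
          (measurableSet_dyadicSq n.1).prod (measurableSet_dyadicSq n.2)) _ hq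
    _ ≤ ∑' n, κ ^ q * C₀ * (N n ^ p * V n ^ (1 - p)) ^ (q / p) := by
        refine ENNReal.tsum_le_tsum fun n => ?_
        rw [ENNReal.mul_rpow_of_nonneg _ _ hq.le, mul_assoc, mul_assoc]
        exact mul_le_mul_right (ENNReal.div_rpow_mul_le_of_le_mul_rpow (hV₀ n)
          (ENNReal.mul_ne_top (hV₁ n) (hV₂ n)) hp hq.le (hcarl n)) _
    _ ≤ κ ^ q * C₀ * (∑' n, N n ^ p * V n ^ (1 - p)) ^ (q / p) := by
        rw [ENNReal.tsum_mul_left]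
        gcongr
        exact ENNReal.tsum_rpow_le_rpow_tsum _ ((one_le_div hp).2 hpq)
    _ ≤ κ ^ q * C₀ * (C * ∫⁻ z, (‖f z‖₊ : ℝ≥0∞) ^ p ∂(Vm α₁).prod (Vm α₂)) ^ (q / p) := by
        gcongr
        refine le_of_eq_of_le (tsum_congr fun n => ?_) (hC _ hf.nnnorm.coe_nnreal_ennreal)
        rw [ENNReal.mul_rpow_of_ne_top (hV₁ n) (hV₂ n)]
        ring
    _ = κ ^ q * C₀ * C ^ (q / p)
          * (∫⁻ z, (‖f z‖₊ : ℝ≥0∞) ^ p ∂(Vm α₁).prod (Vm α₂)) ^ (q / p) := by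
        rw [ENNReal.mul_rpow_of_nonneg C _ (div_nonneg hq.le hp.le)]
        ring

theorem strong_maximal_carleson_embedding_general
    (α₁ α₂ : ℝ) (hα₁ : -1 < α₁) (hα₂ : -1 < α₂)
    (p q : ℝ) (hp : 1 < p) (hpq : p ≤ q)
    (μ : Measure (ℂ × ℂ)) (C₀ : ℝ)
    (hcarl : ∀ a₁ b₁ a₂ b₂ : ℝ, a₁ < b₁ → a₂ < b₂ →
      μ (carlSq a₁ b₁ ×ˢ carlSq a₂ b₂) ≤
        ENNReal.ofReal C₀ *
          (Vm α₁ (carlSq a₁ b₁) * Vm α₂ (carlSq a₂ b₂)) ^ (q / p)) :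
    ∃ C : ℝ, 0 < C ∧ ∀ f : ℂ × ℂ → ℂ,
      MemLp f (ENNReal.ofReal p) ((Vm α₁).prod (Vm α₂)) →
      (∫⁻ z in UHP ×ˢ UHP, (strongMaxFn α₁ α₂ f z) ^ q ∂μ) ≤
        ENNReal.ofReal C *
          (∫⁻ z, (‖f z‖₊ : ℝ≥0∞) ^ p ∂((Vm α₁).prod (Vm α₂))) ^ (q / p) := by
  obtain ⟨C₁, hC₁, h₁⟩ := exists_tsum_Vm_dyadicSq_rpow_le hα₁ hp
  obtain ⟨C₂, hC₂, h₂⟩ := exists_tsum_Vm_dyadicSq_rpow_le hα₂ hp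
  set K := (ENNReal.ofReal (4 ^ (α₁ + 2)) * ENNReal.ofReal (4 ^ (α₂ + 2))) ^ q
    * ENNReal.ofReal C₀ * (C₁ * C₂) ^ (q / p)
  have hK : K ≠ ∞ :=
    ENNReal.mul_ne_top (ENNReal.mul_ne_top (ENNReal.rpow_ne_top_of_nonneg (by linarith)
      (by finiteness)) ENNReal.ofReal_ne_top)
      (ENNReal.rpow_ne_top_of_nonneg (div_nonneg (by linarith) (by linarith))
        (ENNReal.mul_ne_top hC₁ hC₂))
  refine ⟨K.toReal + 1, by positivity, fun f hf => ?_⟩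
  have hf' := hf.aestronglyMeasurable.aemeasurable
  calc ∫⁻ z in UHP ×ˢ UHP, strongMaxFn α₁ α₂ f z ^ q ∂μ
      ≤ ∫⁻ z, strongMaxFn α₁ α₂ (hf'.mk f) z ^ q ∂μ := by
        rw [strongMaxFn_congr_ae hf'.ae_eq_mk]
        exact setLIntegral_le_lintegral _ _
    _ ≤ K * (∫⁻ z, (‖hf'.mk f z‖₊ : ℝ≥0∞) ^ p ∂(Vm α₁).prod (Vm α₂)) ^ (q / p) :=
        lintegral_strongMaxFn_rpow_le hα₁ hα₂ (by linarith) hpq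
          (fun n => hcarl _ _ _ _ (dyadicSq_left_lt_right n.1) (dyadicSq_left_lt_right n.2))
          (fun _ hg => tsum_rpow_setLIntegral_prod_le h₁ h₂ hg) hf'.measurable_mk
    _ = K * (∫⁻ z, (‖f z‖₊ : ℝ≥0∞) ^ p ∂(Vm α₁).prod (Vm α₂)) ^ (q / p) := by
        congr 2
        refine lintegral_congr_ae ?_
        filter_upwards [hf'.ae_eq_mk] with z hz
        rw [hz]
    _ ≤ ENNReal.ofReal (K.toReal + 1)
          * (∫⁻ z, (‖f z‖₊ : ℝ≥0∞) ^ p ∂(Vm α₁).prod (Vm α₂)) ^ (q / p) := by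
        gcongr
        exact (ENNReal.le_ofReal_iff_toReal_le hK (by positivity)).2 (by linarith)

/-- if `μ` is a `(q/p, α⃗)`-Carleson measure on `Π⁺×Π⁺`, then the strong
maximal function satisfies the embedding
`∫ (M_{α⃗}f)^q dμ ≤ C (∫ |f|^p dV_{α⃗})^{q/p}` for every `f ∈ L^p(dV_{α⃗})`. -/
theorem strong_maximal_carleson_embedding
    (α₁ α₂ : ℝ) (hα₁ : -1 < α₁) (hα₂ : -1 < α₂)
    (p q : ℝ) (hp : 1 < p) (hpq : p ≤ q)
    (μ : Measure (ℂ × ℂ)) (C₀ : ℝ) (hC₀ : 0 < C₀)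
    (hcarl : ∀ a₁ b₁ a₂ b₂ : ℝ, a₁ < b₁ → a₂ < b₂ →
      μ (carlSq a₁ b₁ ×ˢ carlSq a₂ b₂) ≤
        ENNReal.ofReal C₀ *
          (Vm α₁ (carlSq a₁ b₁) * Vm α₂ (carlSq a₂ b₂)) ^ (q / p)) :
    ∃ C : ℝ, 0 < C ∧ ∀ f : ℂ × ℂ → ℂ,
      MemLp f (ENNReal.ofReal p) ((Vm α₁).prod (Vm α₂)) →
      (∫⁻ z in UHP ×ˢ UHP, (strongMaxFn α₁ α₂ f z) ^ q ∂μ) ≤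
        ENNReal.ofReal C *
          (∫⁻ z, (‖f z‖₊ : ℝ≥0∞) ^ p ∂((Vm α₁).prod (Vm α₂))) ^ (q / p) :=
  strong_maximal_carleson_embedding_general α₁ α₂ hα₁ hα₂ p q hp hpq μ C₀ hcarl
end
end
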